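/- arXiv:2111.01559 — 12 statements merged into one kernel-verified Lean document; each statement's English description precedes it below -/
import Mathlib

section
/- If the residue characteristic is not 2, then trace ρ(g) ≡ χ₁(g) + χ₂(g) (mod π^n) for all g ∈ G if and only if det(t − ρ(g)) ≡ (t − χ₁(g))(t − χ₂(g)) (mod π^n) for all g ∈ G. (Equivalently: given trace ρ(g) ≡ χ₁(g)+χ₂(g) mod π^n for all g, it follows that det ρ(g) ≡ χ₁(g)χ₂(g) mod π^n for all g.) -/
/-!
For a `2 × 2` matrix `M`, `2 det M = (tr M)² - tr(M²)`. Applied to `ρ(g)` modulo `π^n`, the trace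
congruences at `g` and at `g²` give `2 det ρ(g) ≡ (χ₁ g + χ₂ g)² - (χ₁ g² + χ₂ g²) = 2 χ₁(g) χ₂(g)`,
and `2` can be cancelled.
-/

theorem Matrix.two_mul_det_fin_two {R : Type*} [CommRing R] (M : Matrix (Fin 2) (Fin 2) R) :
    2 * M.det = M.trace ^ 2 - (M * M).trace := by
  simp only [trace_fin_two, det_fin_two, mul_apply, Fin.sum_univ_two]
  ring

theorem Matrix.det_fin_two_eq_mul_of_trace {R : Type*} [CommRing R] (h2 : IsUnit (2 : R))
    {M : Matrix (Fin 2) (Fin 2) R} {a b : R} (htr : M.trace = a + b)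
    (htr_sq : (M * M).trace = a ^ 2 + b ^ 2) : M.det = a * b :=
  h2.mul_left_cancel <| by rw [two_mul_det_fin_two, htr, htr_sq]; ring

theorem trace_reducible_iff_charpoly_reducible_general
    {O : Type*} [CommRing O]
    (π : O) (h2 : IsUnit (2 : O))
    {G : Type*} [Group G] (n : ℕ)
    (ρ : G →* GL (Fin 2) O)
    (χ₁ χ₂ : G →* (O ⧸ Ideal.span {π ^ n})ˣ) :
    (∀ g : G, Ideal.Quotient.mk (Ideal.span {π ^ n})
        (Matrix.trace (ρ g : Matrix (Fin 2) (Fin 2) O)) = (χ₁ g : O ⧸ Ideal.span {π ^ n}) + χ₂ g)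
    ↔
    (∀ g : G, Ideal.Quotient.mk (Ideal.span {π ^ n})
        (Matrix.trace (ρ g : Matrix (Fin 2) (Fin 2) O)) = (χ₁ g : O ⧸ Ideal.span {π ^ n}) + χ₂ g
      ∧ Ideal.Quotient.mk (Ideal.span {π ^ n})
        (Matrix.det (ρ g : Matrix (Fin 2) (Fin 2) O)) = (χ₁ g : O ⧸ Ideal.span {π ^ n}) * χ₂ g) := by
  set f := Ideal.Quotient.mk (Ideal.span {π ^ n})
  refine ⟨fun h g => ⟨h g, ?_⟩, fun h g => (h g).1⟩
  have hmap (A : Matrix (Fin 2) (Fin 2) O) : f A.trace = (f.mapMatrix A).trace :=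
    AddMonoidHom.map_trace f A
  rw [RingHom.map_det]
  refine Matrix.det_fin_two_eq_mul_of_trace (h2.map f) ?_ ?_
  · rw [← hmap, h g]
  · rw [← map_mul, ← hmap, ← Units.val_mul, ← map_mul, h (g * g)]
    simp only [map_mul, Units.val_mul]; ring

/-- If the residue characteristic is not 2 (i.e. `2` is a unit of the DVR `O`),
then the trace of `ρ` is congruent to `χ₁ + χ₂` mod `π^n` if and only if the
characteristic polynomial of `ρ(g)` factors as `(t - χ₁(g))(t - χ₂(g))` mod `π^n`
(i.e. both the trace and determinant congruences hold). -/
theorem trace_reducible_iff_charpoly_reducible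
    {O : Type*} [CommRing O] [IsDomain O] [IsDiscreteValuationRing O]
    (π : O) (hπ : Irreducible π) (h2 : IsUnit (2 : O))
    {G : Type*} [Group G] (n : ℕ)
    (ρ : G →* GL (Fin 2) O)
    (χ₁ χ₂ : G →* (O ⧸ Ideal.span {π ^ n})ˣ) :
    (∀ g : G, Ideal.Quotient.mk (Ideal.span {π ^ n})
        (Matrix.trace (ρ g : Matrix (Fin 2) (Fin 2) O)) = (χ₁ g : O ⧸ Ideal.span {π ^ n}) + χ₂ g)
    ↔
    (∀ g : G, Ideal.Quotient.mk (Ideal.span {π ^ n})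
        (Matrix.trace (ρ g : Matrix (Fin 2) (Fin 2) O)) = (χ₁ g : O ⧸ Ideal.span {π ^ n}) + χ₂ g
      ∧ Ideal.Quotient.mk (Ideal.span {π ^ n})
        (Matrix.det (ρ g : Matrix (Fin 2) (Fin 2) O)) = (χ₁ g : O ⧸ Ideal.span {π ^ n}) * χ₂ g) :=
  trace_reducible_iff_charpoly_reducible_general π h2 n ρ χ₁ χ₂
end

section
/- Let ρ : G → GL₂(O) be a representation and (χ₁, χ₂) a pair of conjugate characters modulo π^n, i.e. trace ρ(g) ≡ χ₁(g)+χ₂(g) and det ρ(g) ≡ χ₁(g)χ₂(g) mod π^n for all g. Then for any g, h ∈ G and a, b ∈ O, the matrix f = a·ρ(g) + b·ρ(h) satisfies trace(f) ≡ (a χ₁(g)+b χ₁(h)) + (a χ₂(g)+b χ₂(h)) and det(f) ≡ (a χ₁(g)+b χ₁(h))·(a χ₂(g)+b χ₂(h)) modulo π^n. -/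
/-!
The trace is linear, which settles the first congruence. For the determinant, a `2 × 2`
polarisation identity expresses `det (a • A + b • B)` through `det A`, `det B`, `trace A`,
`trace B` and `trace (A * B)`. Since `ρ g * ρ h = ρ (g * h)` and the characters are
multiplicative, `trace (ρ g * ρ h) ≡ χ₁ g χ₁ h + χ₂ g χ₂ h`, and the right-hand side then
factors as `(a χ₁ g + b χ₁ h)(a χ₂ g + b χ₂ h)`.
-/

open Matrix

namespace Matrix

variable {R S : Type*} [CommRing R] [CommRing S]

theorem det_smul_add_smul_fin_two (A B : Matrix (Fin 2) (Fin 2) R) (a b : R) :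
    (a • A + b • B).det =
      a ^ 2 * A.det + b ^ 2 * B.det + a * b * (A.trace * B.trace - (A * B).trace) := by
  simp only [det_fin_two, trace_fin_two, add_apply, smul_apply, mul_apply, Fin.sum_univ_two,
    smul_eq_mul]
  ring

theorem map_trace_smul_add_smul {n : Type*} [Fintype n] (f : R →+* S) (A B : Matrix n n R)
    (a b : R) {α₁ α₂ β₁ β₂ : S} (hA : f A.trace = α₁ + α₂) (hB : f B.trace = β₁ + β₂) :
    f (a • A + b • B).trace = (f a * α₁ + f b * β₁) + (f a * α₂ + f b * β₂) := by
  rw [trace_add, trace_smul, trace_smul, smul_eq_mul, smul_eq_mul, map_add, map_mul, map_mul,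
    hA, hB]
  ring

theorem map_det_smul_add_smul_fin_two (f : R →+* S) (A B : Matrix (Fin 2) (Fin 2) R) (a b : R)
    {α₁ α₂ β₁ β₂ : S} (hAtr : f A.trace = α₁ + α₂) (hAdet : f A.det = α₁ * α₂)
    (hBtr : f B.trace = β₁ + β₂) (hBdet : f B.det = β₁ * β₂)
    (hAB : f (A * B).trace = α₁ * β₁ + α₂ * β₂) :
    f (a • A + b • B).det = (f a * α₁ + f b * β₁) * (f a * α₂ + f b * β₂) := by
  rw [det_smul_add_smul_fin_two]
  simp only [map_add, map_mul, map_sub, map_pow, hAtr, hAdet, hBtr, hBdet, hAB]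
  ring

end Matrix

theorem charpoly_factorisation_of_linear_combination_general
    {O : Type*} [CommRing O]
    (π : O)
    {G : Type*} [Group G] (n : ℕ)
    (ρ : G →* GL (Fin 2) O)
    (χ₁ χ₂ : G →* (O ⧸ Ideal.span {π ^ n})ˣ)
    (hconj : ∀ g : G,
      Ideal.Quotient.mk (Ideal.span {π ^ n})
        (Matrix.trace (ρ g : Matrix (Fin 2) (Fin 2) O)) = (χ₁ g : O ⧸ Ideal.span {π ^ n}) + χ₂ g
      ∧ Ideal.Quotient.mk (Ideal.span {π ^ n})
        (Matrix.det (ρ g : Matrix (Fin 2) (Fin 2) O)) = (χ₁ g : O ⧸ Ideal.span {π ^ n}) * χ₂ g)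
    (g h : G) (a b : O) :
    Ideal.Quotient.mk (Ideal.span {π ^ n})
        (Matrix.trace (a • (ρ g : Matrix (Fin 2) (Fin 2) O) + b • (ρ h : Matrix (Fin 2) (Fin 2) O)))
      = (Ideal.Quotient.mk (Ideal.span {π ^ n}) a * χ₁ g
          + Ideal.Quotient.mk (Ideal.span {π ^ n}) b * χ₁ h)
        + (Ideal.Quotient.mk (Ideal.span {π ^ n}) a * χ₂ g
          + Ideal.Quotient.mk (Ideal.span {π ^ n}) b * χ₂ h)
    ∧ Ideal.Quotient.mk (Ideal.span {π ^ n})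
        (Matrix.det (a • (ρ g : Matrix (Fin 2) (Fin 2) O) + b • (ρ h : Matrix (Fin 2) (Fin 2) O)))
      = (Ideal.Quotient.mk (Ideal.span {π ^ n}) a * χ₁ g
          + Ideal.Quotient.mk (Ideal.span {π ^ n}) b * χ₁ h)
        * (Ideal.Quotient.mk (Ideal.span {π ^ n}) a * χ₂ g
          + Ideal.Quotient.mk (Ideal.span {π ^ n}) b * χ₂ h) := by
  have htrace_mul : Ideal.Quotient.mk (Ideal.span {π ^ n})
      ((ρ g : Matrix (Fin 2) (Fin 2) O) * ρ h).trace
        = (χ₁ g : O ⧸ Ideal.span {π ^ n}) * χ₁ h + (χ₂ g : O ⧸ Ideal.span {π ^ n}) * χ₂ h := by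
    rw [← Units.val_mul, ← map_mul, (hconj (g * h)).1, map_mul, map_mul, Units.val_mul, Units.val_mul]
  exact ⟨map_trace_smul_add_smul _ _ _ a b (hconj g).1 (hconj h).1,
    map_det_smul_add_smul_fin_two _ _ _ a b (hconj g).1 (hconj g).2 (hconj h).1 (hconj h).2
      htrace_mul⟩

/-- If `(χ₁, χ₂)` is a pair of conjugate characters of `ρ` modulo `π^n`, then for any
`g, h ∈ G` and `a, b ∈ O`, the element `f = a·ρ(g) + b·ρ(h)` of the `O`-span of `ρ(G)`
satisfies the analogous trace and determinant congruences modulo `π^n`. -/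
theorem charpoly_factorisation_of_linear_combination
    {O : Type*} [CommRing O] [IsDomain O] [IsDiscreteValuationRing O]
    (π : O) (hπ : Irreducible π)
    {G : Type*} [Group G] (n : ℕ)
    (ρ : G →* GL (Fin 2) O)
    (χ₁ χ₂ : G →* (O ⧸ Ideal.span {π ^ n})ˣ)
    (hconj : ∀ g : G,
      Ideal.Quotient.mk (Ideal.span {π ^ n})
        (Matrix.trace (ρ g : Matrix (Fin 2) (Fin 2) O)) = (χ₁ g : O ⧸ Ideal.span {π ^ n}) + χ₂ g
      ∧ Ideal.Quotient.mk (Ideal.span {π ^ n})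
        (Matrix.det (ρ g : Matrix (Fin 2) (Fin 2) O)) = (χ₁ g : O ⧸ Ideal.span {π ^ n}) * χ₂ g)
    (g h : G) (a b : O) :
    Ideal.Quotient.mk (Ideal.span {π ^ n})
        (Matrix.trace (a • (ρ g : Matrix (Fin 2) (Fin 2) O) + b • (ρ h : Matrix (Fin 2) (Fin 2) O)))
      = (Ideal.Quotient.mk (Ideal.span {π ^ n}) a * χ₁ g
          + Ideal.Quotient.mk (Ideal.span {π ^ n}) b * χ₁ h)
        + (Ideal.Quotient.mk (Ideal.span {π ^ n}) a * χ₂ g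
          + Ideal.Quotient.mk (Ideal.span {π ^ n}) b * χ₂ h)
    ∧ Ideal.Quotient.mk (Ideal.span {π ^ n})
        (Matrix.det (a • (ρ g : Matrix (Fin 2) (Fin 2) O) + b • (ρ h : Matrix (Fin 2) (Fin 2) O)))
      = (Ideal.Quotient.mk (Ideal.span {π ^ n}) a * χ₁ g
          + Ideal.Quotient.mk (Ideal.span {π ^ n}) b * χ₁ h)
        * (Ideal.Quotient.mk (Ideal.span {π ^ n}) a * χ₂ g
          + Ideal.Quotient.mk (Ideal.span {π ^ n}) b * χ₂ h) :=
  charpoly_factorisation_of_linear_combination_general π n ρ χ₁ χ₂ hconj g h a b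
end

section
/- Let (χ₁, χ₂) and (η₁, η₂) be two pairs of conjugate characters of ρ modulo π^n. Suppose m(χ₁,χ₂) ≥ n/2, where m(χ₁,χ₂) is the largest integer m with χ₁ ≡ χ₂ mod π^m. Then χ₁ ≡ χ₂ ≡ η₁ ≡ η₂ modulo π^⌈n/2⌉. -/
open Matrix

/-- `(χ₁, χ₂)` is a pair of conjugate characters of `ρ` modulo `π^n`:
the characteristic polynomial of `ρ(g)` factors as `(t-χ₁(g))(t-χ₂(g))` mod `π^n`. -/
def IsConjPair {O : Type*} [CommRing O] {G : Type*} [Group G] (π : O) (n : ℕ)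
    (ρ : G →* GL (Fin 2) O) (χ₁ χ₂ : G →* (O ⧸ Ideal.span {π ^ n})ˣ) : Prop :=
  ∀ g : G,
    Ideal.Quotient.mk (Ideal.span {π ^ n})
      (Matrix.trace (ρ g : Matrix (Fin 2) (Fin 2) O)) = (χ₁ g : O ⧸ Ideal.span {π ^ n}) + χ₂ g
    ∧ Ideal.Quotient.mk (Ideal.span {π ^ n})
      (Matrix.det (ρ g : Matrix (Fin 2) (Fin 2) O)) = (χ₁ g : O ⧸ Ideal.span {π ^ n}) * χ₂ g

/-!
With `A = χ₁ g`, `B = χ₂ g`, `C = η₁ g`, `D = η₂ g`, equality of traces and determinants gives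
`(A - C)(A - D) = A² - (C + D) A + CD = 0` and `(A - C) + (A - D) = A - B`. So `x = A - C` and
`y = A - D` satisfy `π^n ∣ xy` and `π^k ∣ x + y` for `k = ⌈n/2⌉ ≤ m`. Since `π` is prime, one of
`x, y` has valuation at least `n/2`, hence at least `k`, and then so does the other.
-/

theorem Ideal.Quotient.mk_pow_dvd_mk_iff {R : Type*} [CommRing R] (p : R) {n k : ℕ}
    (hk : k ≤ n) (x : R) :
    mk (span {p ^ n}) p ^ k ∣ mk (span {p ^ n}) x ↔ p ^ k ∣ x := by
  constructor
  · rintro ⟨y, hy⟩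
    obtain ⟨y, rfl⟩ := mk_surjective y
    rw [← map_pow, ← _root_.map_mul, Ideal.Quotient.eq, mem_span_singleton] at hy
    obtain ⟨c, hc⟩ := hy
    exact ⟨y + p ^ (n - k) * c, by linear_combination hc - c * pow_sub_mul_pow p hk⟩
  · rintro ⟨c, rfl⟩
    exact ⟨mk _ c, by rw [← map_pow, ← _root_.map_mul]⟩

theorem Prime.pow_dvd_of_pow_dvd_mul_of_pow_dvd_add {R : Type*} [CommRing R] [IsDomain R]
    {p : R} (hp : Prime p) {k n : ℕ} (hk : 2 * k ≤ n + 1) {a b : R}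
    (hab : p ^ n ∣ a * b) (hs : p ^ k ∣ a + b) : p ^ k ∣ a ∧ p ^ k ∣ b := by
  induction k generalizing n a b with
  | zero => simp
  | succ k ih =>
    have hp_add : p ∣ a + b := (dvd_pow_self p k.succ_ne_zero).trans hs
    have hp_mul : p ∣ a * b := (dvd_pow_self p (by omega)).trans hab
    obtain ⟨⟨a', rfl⟩, ⟨b', rfl⟩⟩ : p ∣ a ∧ p ∣ b := by
      rcases hp.dvd_or_dvd hp_mul with ha | hb
      · exact ⟨ha, (dvd_add_right ha).mp hp_add⟩
      · exact ⟨(dvd_add_left hb).mp hp_add, hb⟩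
    have hp0 : p ≠ 0 := hp.ne_zero
    have hab' : p ^ (n - 2) ∣ a' * b' := by
      rcases lt_or_ge n 2 with hn | hn
      · simp [Nat.sub_eq_zero_of_le hn.le]
      · refine (mul_dvd_mul_iff_left (pow_ne_zero 2 hp0)).mp ?_
        rw [← pow_add, Nat.add_sub_cancel' hn]
        exact hab.trans (dvd_of_eq (by ring))
    have hs' : p ^ k ∣ a' + b' := by
      rw [pow_succ', ← mul_add] at hs
      exact (mul_dvd_mul_iff_left hp0).mp hs
    obtain ⟨ha', hb'⟩ := ih (by omega) hab' hs'
    rw [pow_succ']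
    exact ⟨mul_dvd_mul_left p ha', mul_dvd_mul_left p hb'⟩

theorem Prime.pow_dvd_of_mul_eq_zero_of_pow_dvd_add {R : Type*} [CommRing R] [IsDomain R]
    {p : R} (hp : Prime p) {k n : ℕ} (hk : 2 * k ≤ n + 1) {x y : R ⧸ Ideal.span {p ^ n}}
    (hxy : x * y = 0) (hs : Ideal.Quotient.mk _ p ^ k ∣ x + y) :
    Ideal.Quotient.mk _ p ^ k ∣ x ∧ Ideal.Quotient.mk _ p ^ k ∣ y := by
  obtain ⟨a, rfl⟩ := Ideal.Quotient.mk_surjective x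
  obtain ⟨b, rfl⟩ := Ideal.Quotient.mk_surjective y
  have hkn : k ≤ n := by omega
  rw [← map_add, Ideal.Quotient.mk_pow_dvd_mk_iff p hkn] at hs
  rw [← _root_.map_mul, Ideal.Quotient.eq_zero_iff_mem, Ideal.mem_span_singleton] at hxy
  simp only [Ideal.Quotient.mk_pow_dvd_mk_iff p hkn]
  exact hp.pow_dvd_of_pow_dvd_mul_of_pow_dvd_add hk hxy hs

theorem conj_pairs_congruent_of_large_m_general
    {O : Type*} [CommRing O] [IsDomain O] [IsDiscreteValuationRing O]
    (π : O) (hπ : Irreducible π)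
    {G : Type*} [Group G] (n : ℕ)
    (ρ : G →* GL (Fin 2) O)
    (χ₁ χ₂ η₁ η₂ : G →* (O ⧸ Ideal.span {π ^ n})ˣ)
    (hχ : IsConjPair π n ρ χ₁ χ₂) (hη : IsConjPair π n ρ η₁ η₂)
    (m : ℕ) (hm2 : n ≤ 2 * m)
    (hm : ∀ g : G, (Ideal.Quotient.mk (Ideal.span {π ^ n}) π) ^ m ∣
        ((χ₁ g : O ⧸ Ideal.span {π ^ n}) - χ₂ g)) :
    ∀ g : G,
      (Ideal.Quotient.mk (Ideal.span {π ^ n}) π) ^ ((n + 1) / 2) ∣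
        ((χ₁ g : O ⧸ Ideal.span {π ^ n}) - χ₂ g)
      ∧ (Ideal.Quotient.mk (Ideal.span {π ^ n}) π) ^ ((n + 1) / 2) ∣
        ((χ₁ g : O ⧸ Ideal.span {π ^ n}) - η₁ g)
      ∧ (Ideal.Quotient.mk (Ideal.span {π ^ n}) π) ^ ((n + 1) / 2) ∣
        ((χ₁ g : O ⧸ Ideal.span {π ^ n}) - η₂ g) := by
  intro g
  have htr := (hχ g).1.symm.trans (hη g).1
  have hdet := (hχ g).2.symm.trans (hη g).2
  have hAB := (pow_dvd_pow _ (show (n + 1) / 2 ≤ m by omega)).trans (hm g)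
  have hprod : ((χ₁ g : O ⧸ Ideal.span {π ^ n}) - η₁ g) * (χ₁ g - η₂ g) = 0 := by
    linear_combination (χ₁ g : O ⧸ Ideal.span {π ^ n}) * htr - hdet
  have hsum : ((χ₁ g : O ⧸ Ideal.span {π ^ n}) - η₁ g) + (χ₁ g - η₂ g) = χ₁ g - χ₂ g := by
    linear_combination htr
  exact ⟨hAB, hπ.prime.pow_dvd_of_mul_eq_zero_of_pow_dvd_add (by omega) hprod (hsum ▸ hAB)⟩

/-- If `(χ₁,χ₂)` and `(η₁,η₂)` are two pairs of conjugate characters modulo `π^n` and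
`χ₁ ≡ χ₂ (mod π^m)` with `m ≥ n/2`, then all four characters are congruent
modulo `π^⌈n/2⌉`. -/
theorem conj_pairs_congruent_of_large_m
    {O : Type*} [CommRing O] [IsDomain O] [IsDiscreteValuationRing O]
    (π : O) (hπ : Irreducible π) (h2 : IsUnit (2 : O))
    {G : Type*} [Group G] (n : ℕ)
    (ρ : G →* GL (Fin 2) O)
    (χ₁ χ₂ η₁ η₂ : G →* (O ⧸ Ideal.span {π ^ n})ˣ)
    (hχ : IsConjPair π n ρ χ₁ χ₂) (hη : IsConjPair π n ρ η₁ η₂)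
    (m : ℕ) (hm2 : n ≤ 2 * m)
    (hm : ∀ g : G, (Ideal.Quotient.mk (Ideal.span {π ^ n}) π) ^ m ∣
        ((χ₁ g : O ⧸ Ideal.span {π ^ n}) - χ₂ g)) :
    ∀ g : G,
      (Ideal.Quotient.mk (Ideal.span {π ^ n}) π) ^ ((n + 1) / 2) ∣
        ((χ₁ g : O ⧸ Ideal.span {π ^ n}) - χ₂ g)
      ∧ (Ideal.Quotient.mk (Ideal.span {π ^ n}) π) ^ ((n + 1) / 2) ∣
        ((χ₁ g : O ⧸ Ideal.span {π ^ n}) - η₁ g)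
      ∧ (Ideal.Quotient.mk (Ideal.span {π ^ n}) π) ^ ((n + 1) / 2) ∣
        ((χ₁ g : O ⧸ Ideal.span {π ^ n}) - η₂ g) :=
  conj_pairs_congruent_of_large_m_general π hπ n ρ χ₁ χ₂ η₁ η₂ hχ hη m hm2 hm
end

section
/- Let (χ₁, χ₂) and (η₁, η₂) be two pairs of conjugate characters of ρ modulo π^n, and suppose m(χ₁,χ₂) < n/2. Then, up to swapping η₁ and η₂, one has χ₁ ≡ η₁ and χ₂ ≡ η₂ modulo π^(n−m(χ₁,χ₂)). -/
/-!
Put `A = χ₁ - η₁` and `B = χ₁ - η₂`. Equality of traces and determinants gives `A * B = 0` and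
`A + B = χ₁ - χ₂` modulo `π^n`, and `χ₂ - η₁ = -B`. At an element `g₀` with
`χ₁ g₀ ≢ χ₂ g₀ (mod π^(m+1))` one of `A g₀`, `B g₀`, say `A g₀`, is not divisible by `π^(m+1)`,
so `π^(n-m) ∣ B g₀`. If `π^(n-m) ∤ B g` for some `g`, then `π^(m+1) ∣ A g`, hence
`π^(m+1) ∤ A (g₀ g)` and `π^(n-m) ∣ B (g₀ g)`; the identity
`B (g₀ g) = B g₀ * η₂ g + χ₁ g₀ * B g` then gives `π^(n-m) ∣ B g` after all.
-/

open Matrix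

theorem Ideal.Quotient.mk_pow_dvd_mk_iff_s4 {O : Type*} [CommRing O] (π : O) {n k : ℕ}
    (hk : k ≤ n) (a : O) :
    Ideal.Quotient.mk (Ideal.span {π ^ n}) π ^ k ∣ Ideal.Quotient.mk (Ideal.span {π ^ n}) a
      ↔ π ^ k ∣ a := by
  have hle : Ideal.span {π ^ n} ≤ Ideal.span {π ^ k} :=
    Ideal.span_singleton_le_span_singleton.mpr (pow_dvd_pow π hk)
  rw [← map_pow, ← Ideal.mem_span_singleton, ← Ideal.mem_span_singleton,
    ← Set.image_singleton (f := Ideal.Quotient.mk _), ← Ideal.map_span,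
    Ideal.mem_quotient_iff_mem_sup, sup_eq_left.mpr hle]

theorem pow_dvd_of_pow_dvd_mul_of_not_pow_dvd {O : Type*} [CommRing O] [IsDomain O]
    [IsDiscreteValuationRing O] {π : O} (hπ : Irreducible π) {a b : O} {j k n : ℕ}
    (hjk : j + k = n + 1) (h : π ^ n ∣ a * b) (ha : ¬ π ^ j ∣ a) : π ^ k ∣ b := by
  have ha0 : a ≠ 0 := by rintro rfl; exact ha (dvd_zero _)
  obtain ⟨s, hs⟩ := IsDiscreteValuationRing.associated_pow_irreducible ha0 hπ
  have hsj : s < j := by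
    by_contra! hjs
    exact ha (hs.dvd_iff_dvd_right.mpr (pow_dvd_pow π hjs))
  rw [(hs.mul_right b).dvd_iff_dvd_right, ← Nat.add_sub_of_le (by omega : s ≤ n), pow_add,
    mul_dvd_mul_iff_left (pow_ne_zero s hπ.ne_zero)] at h
  exact (pow_dvd_pow π (by omega)).trans h

theorem Ideal.Quotient.pow_dvd_of_mul_eq_zero_of_not_pow_dvd {O : Type*} [CommRing O]
    [IsDomain O] [IsDiscreteValuationRing O] {π : O} (hπ : Irreducible π) {j k n : ℕ}
    (hjk : j + k = n + 1) {x y : O ⧸ Ideal.span {π ^ n}} (h : x * y = 0)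
    (hx : ¬ Ideal.Quotient.mk (Ideal.span {π ^ n}) π ^ j ∣ x) :
    Ideal.Quotient.mk (Ideal.span {π ^ n}) π ^ k ∣ y := by
  obtain ⟨a, rfl⟩ := Ideal.Quotient.mk_surjective x
  obtain ⟨b, rfl⟩ := Ideal.Quotient.mk_surjective y
  rcases Nat.eq_zero_or_pos j with rfl | hj
  · simp at hx
  rcases Nat.eq_zero_or_pos k with rfl | hk
  · simp
  rw [Ideal.Quotient.mk_pow_dvd_mk_iff_s4 π (by omega)] at hx ⊢
  rw [← map_mul (Ideal.Quotient.mk _), Ideal.Quotient.eq_zero_iff_mem,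
    Ideal.mem_span_singleton] at h
  exact pow_dvd_of_pow_dvd_mul_of_not_pow_dvd hπ hjk h hx

section UnitValued

variable {G R : Type*} [Monoid G] [CommRing R] (χ ν : G →* Rˣ)

theorem val_map_mul_sub_val_map_mul (g h : G) :
    (χ (g * h) : R) - ν (g * h) = ((χ g : R) - ν g) * ν h + χ g * ((χ h : R) - ν h) := by
  simp only [map_mul, Units.val_mul]
  ring

variable {χ ν} {d : R}

theorem dvd_val_map_mul_sub_iff_right {g : G} (hg : d ∣ (χ g : R) - ν g) (h : G) :
    d ∣ (χ (g * h) : R) - ν (g * h) ↔ d ∣ (χ h : R) - ν h := by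
  rw [val_map_mul_sub_val_map_mul, dvd_add_right (hg.mul_right _), Units.dvd_mul_left]

theorem dvd_val_map_mul_sub_iff_left {h : G} (hh : d ∣ (χ h : R) - ν h) (g : G) :
    d ∣ (χ (g * h) : R) - ν (g * h) ↔ d ∣ (χ g : R) - ν g := by
  rw [val_map_mul_sub_val_map_mul, dvd_add_left (hh.mul_left _), Units.dvd_mul_right]

end UnitValued

namespace IsConjPair

variable {O G : Type*} [CommRing O] [Group G] {π : O} {n : ℕ} {ρ : G →* GL (Fin 2) O}
  {χ₁ χ₂ ν₁ ν₂ : G →* (O ⧸ Ideal.span {π ^ n})ˣ}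

theorem swap (hχ : IsConjPair π n ρ χ₁ χ₂) : IsConjPair π n ρ χ₂ χ₁ := fun g =>
  ⟨(hχ g).1.trans (add_comm _ _), (hχ g).2.trans (mul_comm _ _)⟩

theorem add_eq_add (hχ : IsConjPair π n ρ χ₁ χ₂) (hν : IsConjPair π n ρ ν₁ ν₂) (g : G) :
    (χ₁ g : O ⧸ Ideal.span {π ^ n}) + χ₂ g = ν₁ g + ν₂ g :=
  (hχ g).1.symm.trans (hν g).1

theorem sub_mul_sub_eq_zero (hχ : IsConjPair π n ρ χ₁ χ₂) (hν : IsConjPair π n ρ ν₁ ν₂)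
    (g : G) : ((χ₁ g : O ⧸ Ideal.span {π ^ n}) - ν₁ g) * ((χ₁ g : O ⧸ Ideal.span {π ^ n}) - ν₂ g)
      = 0 := by
  linear_combination (χ₁ g : O ⧸ Ideal.span {π ^ n}) * hχ.add_eq_add hν g
    - (hχ g).2.symm.trans (hν g).2

theorem sub_add_sub_eq (hχ : IsConjPair π n ρ χ₁ χ₂) (hν : IsConjPair π n ρ ν₁ ν₂) (g : G) :
    ((χ₁ g : O ⧸ Ideal.span {π ^ n}) - ν₁ g) + ((χ₁ g : O ⧸ Ideal.span {π ^ n}) - ν₂ g)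
      = (χ₁ g : O ⧸ Ideal.span {π ^ n}) - χ₂ g := by
  linear_combination hχ.add_eq_add hν g

theorem dvd_sub_snd_of_dvd_sub_fst (hχ : IsConjPair π n ρ χ₁ χ₂) (hν : IsConjPair π n ρ ν₁ ν₂)
    {d : O ⧸ Ideal.span {π ^ n}} {g : G} (h : d ∣ (χ₁ g : O ⧸ Ideal.span {π ^ n}) - ν₁ g) :
    d ∣ (χ₂ g : O ⧸ Ideal.span {π ^ n}) - ν₂ g := by
  rw [show (χ₂ g : O ⧸ Ideal.span {π ^ n}) - ν₂ g = -((χ₁ g : O ⧸ Ideal.span {π ^ n}) - ν₁ g) by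
    linear_combination hχ.add_eq_add hν g]
  exact h.neg_right

theorem forall_pow_dvd_sub_of_not_pow_dvd_sub [IsDomain O] [IsDiscreteValuationRing O]
    (hπ : Irreducible π) (hχ : IsConjPair π n ρ χ₁ χ₂) (hν : IsConjPair π n ρ ν₁ ν₂) {m : ℕ}
    (hmn : m < n) {g₀ : G}
    (hg₀ : ¬ Ideal.Quotient.mk (Ideal.span {π ^ n}) π ^ (m + 1) ∣
      (χ₁ g₀ : O ⧸ Ideal.span {π ^ n}) - ν₁ g₀) (g : G) :
    Ideal.Quotient.mk (Ideal.span {π ^ n}) π ^ (n - m) ∣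
        (χ₁ g : O ⧸ Ideal.span {π ^ n}) - ν₂ g
      ∧ Ideal.Quotient.mk (Ideal.span {π ^ n}) π ^ (n - m) ∣
        (χ₂ g : O ⧸ Ideal.span {π ^ n}) - ν₁ g := by
  set p := Ideal.Quotient.mk (Ideal.span {π ^ n}) π
  have hB : ∀ g, ¬ p ^ (m + 1) ∣ (χ₁ g : O ⧸ Ideal.span {π ^ n}) - ν₁ g →
      p ^ (n - m) ∣ (χ₁ g : O ⧸ Ideal.span {π ^ n}) - ν₂ g := fun g =>
    Ideal.Quotient.pow_dvd_of_mul_eq_zero_of_not_pow_dvd hπ (by omega)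
      (hχ.sub_mul_sub_eq_zero hν g)
  have hA : ∀ g, ¬ p ^ (n - m) ∣ (χ₁ g : O ⧸ Ideal.span {π ^ n}) - ν₂ g →
      p ^ (m + 1) ∣ (χ₁ g : O ⧸ Ideal.span {π ^ n}) - ν₁ g := fun g =>
    Ideal.Quotient.pow_dvd_of_mul_eq_zero_of_not_pow_dvd hπ (by omega)
      ((mul_comm _ _).trans (hχ.sub_mul_sub_eq_zero hν g))
  have hBg : p ^ (n - m) ∣ (χ₁ g : O ⧸ Ideal.span {π ^ n}) - ν₂ g := by
    by_contra hBg
    have hAg₀g : ¬ p ^ (m + 1) ∣ (χ₁ (g₀ * g) : O ⧸ Ideal.span {π ^ n}) - ν₁ (g₀ * g) := by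
      rwa [dvd_val_map_mul_sub_iff_left (hA g hBg)]
    exact hBg ((dvd_val_map_mul_sub_iff_right (hB g₀ hg₀) g).mp (hB _ hAg₀g))
  exact ⟨hBg, hχ.dvd_sub_snd_of_dvd_sub_fst hν.swap hBg⟩

end IsConjPair

theorem conj_pairs_congruent_of_small_m_general
    {O : Type*} [CommRing O] [IsDomain O] [IsDiscreteValuationRing O]
    (π : O) (hπ : Irreducible π)
    {G : Type*} [Group G] (n : ℕ)
    (ρ : G →* GL (Fin 2) O)
    (χ₁ χ₂ η₁ η₂ : G →* (O ⧸ Ideal.span {π ^ n})ˣ)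
    (hχ : IsConjPair π n ρ χ₁ χ₂) (hη : IsConjPair π n ρ η₁ η₂)
    (m : ℕ) (hm2 : 2 * m < n)
    (hmax : ¬ ∀ g : G, (Ideal.Quotient.mk (Ideal.span {π ^ n}) π) ^ (m + 1) ∣
        ((χ₁ g : O ⧸ Ideal.span {π ^ n}) - χ₂ g)) :
    (∀ g : G,
      (Ideal.Quotient.mk (Ideal.span {π ^ n}) π) ^ (n - m) ∣
        ((χ₁ g : O ⧸ Ideal.span {π ^ n}) - η₁ g)
      ∧ (Ideal.Quotient.mk (Ideal.span {π ^ n}) π) ^ (n - m) ∣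
        ((χ₂ g : O ⧸ Ideal.span {π ^ n}) - η₂ g))
    ∨ (∀ g : G,
      (Ideal.Quotient.mk (Ideal.span {π ^ n}) π) ^ (n - m) ∣
        ((χ₁ g : O ⧸ Ideal.span {π ^ n}) - η₂ g)
      ∧ (Ideal.Quotient.mk (Ideal.span {π ^ n}) π) ^ (n - m) ∣
        ((χ₂ g : O ⧸ Ideal.span {π ^ n}) - η₁ g)) := by
  obtain ⟨g₀, hg₀⟩ := not_forall.mp hmax
  have hmn : m < n := by omega
  by_cases hη₁ : Ideal.Quotient.mk (Ideal.span {π ^ n}) π ^ (m + 1) ∣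
      (χ₁ g₀ : O ⧸ Ideal.span {π ^ n}) - η₁ g₀
  · have hη₂ : ¬ Ideal.Quotient.mk (Ideal.span {π ^ n}) π ^ (m + 1) ∣
        (χ₁ g₀ : O ⧸ Ideal.span {π ^ n}) - η₂ g₀ := fun hη₂ =>
      hg₀ (hχ.sub_add_sub_eq hη g₀ ▸ dvd_add hη₁ hη₂)
    exact Or.inl (hχ.forall_pow_dvd_sub_of_not_pow_dvd_sub hπ hη.swap hmn hη₂)
  · exact Or.inr (hχ.forall_pow_dvd_sub_of_not_pow_dvd_sub hπ hη hmn hη₁)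

/-- If `(χ₁,χ₂)` and `(η₁,η₂)` are two pairs of conjugate characters modulo `π^n`, and
`m = m(χ₁,χ₂) < n/2` is the largest integer with `χ₁ ≡ χ₂ (mod π^m)`, then up to
swapping `η₁` and `η₂` one has `χ₁ ≡ η₁` and `χ₂ ≡ η₂` modulo `π^(n-m)`. -/
theorem conj_pairs_congruent_of_small_m
    {O : Type*} [CommRing O] [IsDomain O] [IsDiscreteValuationRing O]
    (π : O) (hπ : Irreducible π) (h2 : IsUnit (2 : O))
    {G : Type*} [Group G] (n : ℕ)
    (ρ : G →* GL (Fin 2) O)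
    (χ₁ χ₂ η₁ η₂ : G →* (O ⧸ Ideal.span {π ^ n})ˣ)
    (hχ : IsConjPair π n ρ χ₁ χ₂) (hη : IsConjPair π n ρ η₁ η₂)
    (m : ℕ) (hm2 : 2 * m < n)
    (hm : ∀ g : G, (Ideal.Quotient.mk (Ideal.span {π ^ n}) π) ^ m ∣
        ((χ₁ g : O ⧸ Ideal.span {π ^ n}) - χ₂ g))
    (hmax : ¬ ∀ g : G, (Ideal.Quotient.mk (Ideal.span {π ^ n}) π) ^ (m + 1) ∣
        ((χ₁ g : O ⧸ Ideal.span {π ^ n}) - χ₂ g)) :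
    (∀ g : G,
      (Ideal.Quotient.mk (Ideal.span {π ^ n}) π) ^ (n - m) ∣
        ((χ₁ g : O ⧸ Ideal.span {π ^ n}) - η₁ g)
      ∧ (Ideal.Quotient.mk (Ideal.span {π ^ n}) π) ^ (n - m) ∣
        ((χ₂ g : O ⧸ Ideal.span {π ^ n}) - η₂ g))
    ∨ (∀ g : G,
      (Ideal.Quotient.mk (Ideal.span {π ^ n}) π) ^ (n - m) ∣
        ((χ₁ g : O ⧸ Ideal.span {π ^ n}) - η₂ g)
      ∧ (Ideal.Quotient.mk (Ideal.span {π ^ n}) π) ^ (n - m) ∣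
        ((χ₂ g : O ⧸ Ideal.span {π ^ n}) - η₁ g)) :=
  conj_pairs_congruent_of_small_m_general π hπ n ρ χ₁ χ₂ η₁ η₂ hχ hη m hm2 hmax
end

section
/- Let (χ₁, χ₂) and (η₁, η₂) be two pairs of conjugate characters of ρ modulo π^n. If m(χ₁,χ₂) ≥ n/2 then m(η₁,η₂) ≥ n/2, and if m(χ₁,χ₂) < n/2 then m(η₁,η₂) = m(χ₁,χ₂). -/
open Matrix

/-- `m` is the largest integer (at most `n`) such that `χ₁ ≡ χ₂ (mod π^m)`. -/
def IsCongIndex {O : Type*} [CommRing O] {G : Type*} [Group G] (π : O) (n : ℕ)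
    (χ₁ χ₂ : G →* (O ⧸ Ideal.span {π ^ n})ˣ) (m : ℕ) : Prop :=
  m ≤ n
  ∧ (∀ g : G, (Ideal.Quotient.mk (Ideal.span {π ^ n}) π) ^ m ∣
      ((χ₁ g : O ⧸ Ideal.span {π ^ n}) - χ₂ g))
  ∧ ∀ k ≤ n, (∀ g : G, (Ideal.Quotient.mk (Ideal.span {π ^ n}) π) ^ k ∣
      ((χ₁ g : O ⧸ Ideal.span {π ^ n}) - χ₂ g)) → k ≤ m

/-!
The discriminant `tr(ρ g)² - 4 det(ρ g)` equals `(χ₁ g - χ₂ g)²` modulo `π^n` for every pair of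
conjugate characters, so the differences `x = χ₁ g - χ₂ g` and `y = η₁ g - η₂ g` of two such pairs
satisfy `x² ≡ y² (mod π^n)`. In a DVR this forces `π^k ∣ x ↔ π^k ∣ y` whenever `2k ≤ n + 1`
(square roots of valuations, rounded up). Hence the two sets `{k ≤ n | π^k ∣ χ₁ - χ₂}` and
`{k ≤ n | π^k ∣ η₁ - η₂}`, both initial segments of `ℕ`, agree up to `⌈n/2⌉`; comparing their
maxima gives the dichotomy.
-/

theorem Nat.maxima_dichotomy_of_agree_le_half {P Q : ℕ → Prop} (hP : Antitone P)
    (hQ : Antitone Q) {n mP mQ : ℕ} (hmP : IsGreatest {k | k ≤ n ∧ P k} mP)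
    (hmQ : IsGreatest {k | k ≤ n ∧ Q k} mQ) (hPQ : ∀ k, 2 * k ≤ n + 1 → (P k ↔ Q k)) :
    (n ≤ 2 * mP → n ≤ 2 * mQ) ∧ (2 * mP < n → mQ = mP) := by
  obtain ⟨⟨-, hPmP⟩, hmaxP⟩ := hmP
  obtain ⟨⟨-, hQmQ⟩, hmaxQ⟩ := hmQ
  refine ⟨fun hn => ?_, fun hn => ?_⟩
  · have hhalf : Q ((n + 1) / 2) := (hPQ _ (by omega)).mp (hP (by omega) hPmP)
    have := hmaxQ ⟨by omega, hhalf⟩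
    omega
  · have hle : mP ≤ mQ := hmaxQ ⟨by omega, (hPQ mP (by omega)).mp hPmP⟩
    by_contra hne
    have hsucc : P (mP + 1) := (hPQ _ (by omega)).mpr (hQ (by omega) hQmQ)
    have := hmaxP ⟨by omega, hsucc⟩
    omega

theorem Ideal.Quotient.mk_pow_dvd_mk_iff_of_le {O : Type*} [CommRing O] (π : O) {n k : ℕ}
    (hk : k ≤ n) (x : O) :
    Ideal.Quotient.mk (Ideal.span {π ^ n}) π ^ k ∣ Ideal.Quotient.mk (Ideal.span {π ^ n}) x ↔
      π ^ k ∣ x := by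
  constructor
  · rintro ⟨y, hy⟩
    obtain ⟨z, rfl⟩ := Ideal.Quotient.mk_surjective y
    have hzero : Ideal.Quotient.mk (Ideal.span {π ^ n}) (x - π ^ k * z) = 0 := by
      rw [map_sub, _root_.map_mul, map_pow, hy, sub_self]
    obtain ⟨w, hw⟩ := (pow_dvd_pow π hk).trans ((Ideal.Quotient.eq_zero_iff_dvd _ _).mp hzero)
    exact ⟨z + w, by linear_combination hw⟩
  · rintro ⟨y, rfl⟩
    exact ⟨Ideal.Quotient.mk _ y, by rw [_root_.map_mul, map_pow]⟩

namespace IsDiscreteValuationRing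

variable {O : Type*} [CommRing O] [IsDomain O] [IsDiscreteValuationRing O] {π : O}

theorem pow_dvd_of_pow_dvd_sq (hπ : Irreducible π) {j : ℕ} {x : O} (h : π ^ j ∣ x ^ 2) :
    π ^ ((j + 1) / 2) ∣ x := by
  rcases eq_or_ne x 0 with rfl | hx
  · exact dvd_zero _
  obtain ⟨m, u, rfl⟩ := eq_unit_mul_pow_irreducible hx hπ
  have hsq : π ^ j ∣ π ^ (2 * m) := by
    rw [mul_pow, ← Units.val_pow_eq_pow_val, Units.dvd_mul_left, ← pow_mul, mul_comm] at h
    exact h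
  have hjm : j ≤ 2 * m := (pow_dvd_pow_iff hπ.ne_zero hπ.not_isUnit).mp hsq
  exact (pow_dvd_pow π (by omega)).mul_left _

theorem pow_dvd_of_pow_dvd_sq_sub_sq (hπ : Irreducible π) {n k : ℕ} {x y : O}
    (hxy : π ^ n ∣ x ^ 2 - y ^ 2) (hk : 2 * k ≤ n + 1) (hx : π ^ k ∣ x) : π ^ k ∣ y := by
  have hx2 : π ^ min (2 * k) n ∣ x ^ 2 := by
    refine (pow_dvd_pow π (min_le_left _ _)).trans ?_
    simpa [← pow_mul, mul_comm] using pow_dvd_pow_of_dvd hx 2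
  have hy2 : π ^ min (2 * k) n ∣ y ^ 2 := by
    simpa using dvd_sub hx2 ((pow_dvd_pow π (min_le_right _ _)).trans hxy)
  exact (pow_dvd_pow π (by omega)).trans (pow_dvd_of_pow_dvd_sq hπ hy2)

end IsDiscreteValuationRing

section Characters

variable {O : Type*} [CommRing O] {G : Type*} [Group G] {π : O} {n : ℕ}

/-- `χ₁ ≡ χ₂ (mod π^k)`, for characters with values in `O ⧸ π^n`. -/
def IsCongMod (π : O) (n : ℕ) (χ₁ χ₂ : G →* (O ⧸ Ideal.span {π ^ n})ˣ) (k : ℕ) : Prop :=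
  ∀ g : G, Ideal.Quotient.mk (Ideal.span {π ^ n}) π ^ k ∣
    (χ₁ g : O ⧸ Ideal.span {π ^ n}) - χ₂ g

theorem IsCongMod.antitone (χ₁ χ₂ : G →* (O ⧸ Ideal.span {π ^ n})ˣ) :
    Antitone (IsCongMod π n χ₁ χ₂) :=
  fun _ _ hkl hl g => (pow_dvd_pow _ hkl).trans (hl g)

theorem IsCongIndex.isGreatest {χ₁ χ₂ : G →* (O ⧸ Ideal.span {π ^ n})ˣ} {m : ℕ}
    (h : IsCongIndex π n χ₁ χ₂ m) : IsGreatest {k | k ≤ n ∧ IsCongMod π n χ₁ χ₂ k} m :=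
  ⟨⟨h.1, h.2.1⟩, fun k hk => h.2.2 k hk.1 hk.2⟩

theorem IsConjPair.sub_sq_eq {ρ : G →* GL (Fin 2) O} {χ₁ χ₂ : G →* (O ⧸ Ideal.span {π ^ n})ˣ}
    (h : IsConjPair π n ρ χ₁ χ₂) (g : G) :
    ((χ₁ g : O ⧸ Ideal.span {π ^ n}) - χ₂ g) ^ 2 =
      Ideal.Quotient.mk (Ideal.span {π ^ n})
        ((ρ g : Matrix (Fin 2) (Fin 2) O).trace ^ 2 - 4 * (ρ g : Matrix (Fin 2) (Fin 2) O).det) := by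
  rw [map_sub, _root_.map_mul, map_pow, (h g).1, (h g).2, map_ofNat]
  ring

variable [IsDomain O] [IsDiscreteValuationRing O]

theorem Ideal.Quotient.pow_mk_dvd_of_sq_eq_sq (hπ : Irreducible π) {k : ℕ} (hk : 2 * k ≤ n + 1)
    {x y : O ⧸ Ideal.span {π ^ n}} (hxy : x ^ 2 = y ^ 2)
    (hx : Ideal.Quotient.mk (Ideal.span {π ^ n}) π ^ k ∣ x) :
    Ideal.Quotient.mk (Ideal.span {π ^ n}) π ^ k ∣ y := by
  obtain ⟨a, rfl⟩ := Ideal.Quotient.mk_surjective x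
  obtain ⟨b, rfl⟩ := Ideal.Quotient.mk_surjective y
  have hab : π ^ n ∣ a ^ 2 - b ^ 2 := by
    rw [← Ideal.Quotient.eq_zero_iff_dvd, map_sub, map_pow, map_pow, hxy, sub_self]
  rw [Ideal.Quotient.mk_pow_dvd_mk_iff_of_le π (by omega)] at hx ⊢
  exact IsDiscreteValuationRing.pow_dvd_of_pow_dvd_sq_sub_sq hπ hab hk hx

theorem IsConjPair.isCongMod_of_isCongMod (hπ : Irreducible π) {ρ : G →* GL (Fin 2) O}
    {χ₁ χ₂ η₁ η₂ : G →* (O ⧸ Ideal.span {π ^ n})ˣ} (hχ : IsConjPair π n ρ χ₁ χ₂)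
    (hη : IsConjPair π n ρ η₁ η₂) {k : ℕ} (hk : 2 * k ≤ n + 1) (h : IsCongMod π n χ₁ χ₂ k) :
    IsCongMod π n η₁ η₂ k := fun g =>
  Ideal.Quotient.pow_mk_dvd_of_sq_eq_sq hπ hk ((hχ.sub_sq_eq g).trans (hη.sub_sq_eq g).symm) (h g)

end Characters

theorem cong_index_dichotomy_general
    {O : Type*} [CommRing O] [IsDomain O] [IsDiscreteValuationRing O]
    (π : O) (hπ : Irreducible π)
    {G : Type*} [Group G] (n : ℕ)
    (ρ : G →* GL (Fin 2) O)
    (χ₁ χ₂ η₁ η₂ : G →* (O ⧸ Ideal.span {π ^ n})ˣ)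
    (hχ : IsConjPair π n ρ χ₁ χ₂) (hη : IsConjPair π n ρ η₁ η₂)
    (mχ mη : ℕ)
    (hmχ : IsCongIndex π n χ₁ χ₂ mχ) (hmη : IsCongIndex π n η₁ η₂ mη) :
    (n ≤ 2 * mχ → n ≤ 2 * mη) ∧ (2 * mχ < n → mη = mχ) :=
  Nat.maxima_dichotomy_of_agree_le_half (IsCongMod.antitone χ₁ χ₂) (IsCongMod.antitone η₁ η₂)
    hmχ.isGreatest hmη.isGreatest fun _ hk =>
      ⟨hχ.isCongMod_of_isCongMod hπ hη hk, hη.isCongMod_of_isCongMod hπ hχ hk⟩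

/-- Dichotomy for the congruence indices of two pairs of conjugate characters mod `π^n`:
if `m(χ₁,χ₂) ≥ n/2` then `m(η₁,η₂) ≥ n/2`, and if `m(χ₁,χ₂) < n/2` then
`m(η₁,η₂) = m(χ₁,χ₂)`. -/
theorem cong_index_dichotomy
    {O : Type*} [CommRing O] [IsDomain O] [IsDiscreteValuationRing O]
    (π : O) (hπ : Irreducible π) (h2 : IsUnit (2 : O))
    {G : Type*} [Group G] (n : ℕ)
    (ρ : G →* GL (Fin 2) O)
    (χ₁ χ₂ η₁ η₂ : G →* (O ⧸ Ideal.span {π ^ n})ˣ)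
    (hχ : IsConjPair π n ρ χ₁ χ₂) (hη : IsConjPair π n ρ η₁ η₂)
    (mχ mη : ℕ)
    (hmχ : IsCongIndex π n χ₁ χ₂ mχ) (hmη : IsCongIndex π n η₁ η₂ mη) :
    (n ≤ 2 * mχ → n ≤ 2 * mη) ∧ (2 * mχ < n → mη = mχ) :=
  cong_index_dichotomy_general π hπ n ρ χ₁ χ₂ η₁ η₂ hχ hη mχ mη hmχ hmη
end

section
/- Let g ∈ M₂(O) be a matrix whose reduction mod π is not a scalar matrix, and suppose its characteristic polynomial factors as (t−α)(t−β) mod π^n for some α, β ∈ O/π^n O. Then there exists a basis (v₁, v₂) of the free module (O/π^n O)² with respect to which g mod π^n is represented by the matrix [[α, 1],[0, β]]. -/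
/-! A vector `w` with `det (g w, w)` a unit exists because `g` is not scalar mod `π`: one of
`e₁`, `e₂`, `e₁ + e₂` works, and a determinant that is nonzero mod `π` is a unit in the local
ring `O`. In the basis `u = (g - β) w`, `w` of `(O/π^n)²`, Cayley–Hamilton
`(g - α)(g - β) = 0` says that `u` is an `α`-eigenvector, while `g w = u + β w`. -/

open Matrix

namespace Matrix

variable {R : Type*} [CommRing R]

theorem mulVec_mulVec_self_fin_two (A : Matrix (Fin 2) (Fin 2) R) (w : Fin 2 → R) :
    A *ᵥ (A *ᵥ w) = A.trace • (A *ᵥ w) - A.det • w := by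
  ext i
  fin_cases i <;> simp [mulVec_fin_two, trace_fin_two, det_fin_two] <;> ring

theorem map_of_mulVec_fin_two {S : Type*} [CommRing S] (f : R →+* S)
    (A : Matrix (Fin 2) (Fin 2) R) (w : Fin 2 → R) :
    (of ![A *ᵥ w, w]).map f = of ![A.map f *ᵥ (f ∘ w), f ∘ w] := by
  ext i j
  fin_cases i
  exacts [RingHom.map_mulVec f A w j, rfl]

theorem exists_det_of_mulVec_ne_zero {A : Matrix (Fin 2) (Fin 2) R}
    (hA : ¬ ∃ c : R, A = c • 1) : ∃ w : Fin 2 → R, (of ![A *ᵥ w, w]).det ≠ 0 := by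
  by_cases h10 : A 1 0 = 0
  · by_cases h01 : A 0 1 = 0
    · refine ⟨![1, 1], fun h => hA ⟨A 0 0, ?_⟩⟩
      have h00 : A 0 0 = A 1 1 := by
        simpa [det_fin_two, h10, h01, sub_eq_zero] using h
      ext i j
      fin_cases i <;> fin_cases j <;> simp [h10, h01, h00]
    · refine ⟨![0, 1], ?_⟩
      simpa [det_fin_two] using h01
  · refine ⟨![1, 0], ?_⟩
    simpa [det_fin_two] using h10

theorem exists_inv_mul_mul_eq_triangular_of_isUnit_det {A : Matrix (Fin 2) (Fin 2) R} {α β : R}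
    (htr : A.trace = α + β) (hdet : A.det = α * β) {w : Fin 2 → R}
    (hw : IsUnit (of ![A *ᵥ w, w]).det) :
    ∃ P : (Matrix (Fin 2) (Fin 2) R)ˣ, (P⁻¹).val * A * P.val = !![α, 1; 0, β] := by
  set u := A *ᵥ w - β • w
  have hAu : A *ᵥ u = α • u := by
    rw [mulVec_sub, mulVec_smul, mulVec_mulVec_self_fin_two, htr, hdet]
    module
  have hAw : A *ᵥ w = u + β • w := by
    simp [u]
  set P : Matrix (Fin 2) (Fin 2) R := (of ![u, w])ᵀ
  have hP : IsUnit P := by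
    rw [isUnit_iff_isUnit_det, det_transpose]
    convert hw using 1
    simp only [det_fin_two, of_apply, cons_val', cons_val_zero, cons_val_one, cons_val_fin_one,
      u, Pi.sub_apply, Pi.smul_apply, smul_eq_mul]
    ring
  have hAP : A * P = P * !![α, 1; 0, β] := by
    ext i j
    fin_cases j
    · simpa [P, mul_apply, Fin.sum_univ_two, mulVec, dotProduct, mul_comm] using congrFun hAu i
    · simpa [P, mul_apply, Fin.sum_univ_two, mulVec, dotProduct, mul_comm] using congrFun hAw i
  refine ⟨hP.unit, ?_⟩
  rw [mul_assoc, IsUnit.unit_spec, hAP]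
  exact hP.unit.inv_mul_cancel_left _

end Matrix

theorem Irreducible.isUnit_of_mk_ne_zero {O : Type*} [CommRing O] [IsDomain O]
    [IsDiscreteValuationRing O] {π : O} (hπ : Irreducible π) {x : O}
    (hx : Ideal.Quotient.mk (Ideal.span {π}) x ≠ 0) : IsUnit x := by
  rwa [← IsLocalRing.notMem_maximalIdeal, hπ.maximalIdeal_eq, ← Ideal.Quotient.eq_zero_iff_mem]

/-- If `g ∈ M₂(O)` is not scalar modulo `π` and its characteristic polynomial factors as
`(t-α)(t-β)` mod `π^n`, then there is a basis of `(O/π^n)²` (i.e. a change-of-basis matrix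
`P ∈ GL₂(O/π^n)`) in which `g mod π^n` is represented by `[[α, 1], [0, β]]`. -/
theorem boundary_point_triangular_basis
    {O : Type*} [CommRing O] [IsDomain O] [IsDiscreteValuationRing O]
    (π : O) (hπ : Irreducible π) (n : ℕ)
    (g : Matrix (Fin 2) (Fin 2) O)
    (hns : ¬ ∃ c : O, g.map (Ideal.Quotient.mk (Ideal.span {π}))
        = Ideal.Quotient.mk (Ideal.span {π}) c • (1 : Matrix (Fin 2) (Fin 2) (O ⧸ Ideal.span {π})))
    (α β : O ⧸ Ideal.span {π ^ n})
    (htr : Ideal.Quotient.mk (Ideal.span {π ^ n}) (Matrix.trace g) = α + β)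
    (hdet : Ideal.Quotient.mk (Ideal.span {π ^ n}) (Matrix.det g) = α * β) :
    ∃ P : (Matrix (Fin 2) (Fin 2) (O ⧸ Ideal.span {π ^ n}))ˣ,
      (P⁻¹ : (Matrix (Fin 2) (Fin 2) (O ⧸ Ideal.span {π ^ n}))ˣ).val
          * g.map (Ideal.Quotient.mk (Ideal.span {π ^ n})) * P.val
        = !![α, 1; 0, β] := by
  set q := Ideal.Quotient.mk (Ideal.span {π})
  set f := Ideal.Quotient.mk (Ideal.span {π ^ n})
  have hns_residue : ¬ ∃ c : O ⧸ Ideal.span {π}, g.map q = c • 1 := by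
    rintro ⟨c, hc⟩
    obtain ⟨c, rfl⟩ := Ideal.Quotient.mk_surjective c
    exact hns ⟨c, hc⟩
  obtain ⟨w₀, hw₀⟩ := exists_det_of_mulVec_ne_zero hns_residue
  obtain ⟨w, rfl⟩ := Ideal.Quotient.mk_surjective.comp_left w₀
  have hw : IsUnit (of ![g *ᵥ w, w]).det :=
    hπ.isUnit_of_mk_ne_zero <| by
      rwa [RingHom.map_det, RingHom.mapMatrix_apply, map_of_mulVec_fin_two]
  refine exists_inv_mul_mul_eq_triangular_of_isUnit_det (w := f ∘ w) ?_ ?_ ?_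
  · rw [← AddMonoidHom.map_trace]; exact htr
  · rw [← RingHom.mapMatrix_apply, ← RingHom.map_det]; exact hdet
  · rw [← map_of_mulVec_fin_two, ← RingHom.mapMatrix_apply, ← RingHom.map_det]
    exact hw.map f
end

section
/- Let g ∈ M₂(O) be a matrix whose reduction mod π is not scalar. Then the characteristic polynomial of g is reducible modulo π^n (i.e. factors as (t−α)(t−β) with α, β ∈ O/π^n O) if and only if there exists a g-stable O-lattice Λ' with π^n O² ⊊ Λ' ⊊ O² such that Λ'/π^n O² is a free rank-1 O/π^n O-submodule of O²/π^n O² (equivalently, g is conjugate over O into upper triangular matrices modulo π^n). -/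
/-!
If `a` lifts a root of the characteristic polynomial modulo `π^n`, then `A = g - a` has
`det A ≡ 0 mod π^n`, so `A * adj A = det A • 1` makes every column `v` of `adj A` an
eigenvector of `g` modulo `π^n`. The entries of `adj A` are those of `A` up to sign, and `g`
not being scalar modulo `π` means some entry of `A` is a unit; so some column `v` has a unit
coordinate and completes to a basis `(v, e)` of `O²`, in which `g` is upper triangular modulo
`π^n`. Conversely, conjugation preserves trace and determinant, and the diagonal of a matrix
that is upper triangular modulo `π^n` gives the two roots.
-/

open Matrix

namespace Matrix

variable {n R : Type*} [Fintype n] [DecidableEq n] [CommRing R]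

theorem det_sub_scalar_fin_two (g : Matrix (Fin 2) (Fin 2) R) (a : R) :
    (g - scalar (Fin 2) a).det = a ^ 2 - g.trace * a + g.det := by
  simp [det_fin_two, trace_fin_two]; ring

theorem map_mk_eq_smul_one_iff (I : Ideal R) (g : Matrix n n R) (c : R) :
    g.map (Ideal.Quotient.mk I) = Ideal.Quotient.mk I c • (1 : Matrix n n (R ⧸ I)) ↔
      ∀ i j, (g - scalar n c) i j ∈ I := by
  rw [← Matrix.ext_iff]
  refine forall₂_congr fun i j => ?_
  rw [← Ideal.Quotient.eq_zero_iff_mem]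
  by_cases hij : i = j <;> simp [hij, sub_eq_zero]

theorem exists_mulVec_adjugate_col_eq (g : Matrix n n R) (a m : R) (j : n)
    (hm : m ∣ (g - scalar n a).det) :
    ∃ w, g *ᵥ (g - scalar n a).adjugate.col j =
      a • (g - scalar n a).adjugate.col j + m • w := by
  obtain ⟨d, hd⟩ := hm
  refine ⟨d • Pi.single j 1, ?_⟩
  set A := g - scalar n a
  have hgA : g * A.adjugate = A.det • 1 + a • A.adjugate := by
    rw [show g = A + a • 1 by simp [A, smul_one_eq_diagonal], add_mul, mul_adjugate, smul_mul,
      one_mul]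
  rw [← mulVec_single_one, mulVec_mulVec, hgA, add_mulVec, smul_mulVec, one_mulVec, hd,
    mul_smul, smul_mulVec, add_comm]

theorem exists_isUnit_adjugate_col (A : Matrix (Fin 2) (Fin 2) R) (h : ∃ i j, IsUnit (A i j)) :
    ∃ j, IsUnit (A.adjugate.col j 0) ∨ IsUnit (A.adjugate.col j 1) := by
  obtain ⟨i, j, hij⟩ := h
  fin_cases i <;> fin_cases j <;> simp_all [adjugate_fin_two, Fin.exists_fin_two]

theorem exists_units_col_zero_eq (v : Fin 2 → R) (hv : IsUnit (v 0) ∨ IsUnit (v 1)) :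
    ∃ P : (Matrix (Fin 2) (Fin 2) R)ˣ, P.val.col 0 = v := by
  rcases hv with hv | hv
  · refine ⟨nonsingInvUnit !![v 0, 0; v 1, 1] (by simpa using hv), ?_⟩
    ext i; fin_cases i <;> rfl
  · refine ⟨nonsingInvUnit !![v 0, 1; v 1, 0] (by simpa using hv.neg), ?_⟩
    ext i; fin_cases i <;> rfl

theorem dvd_conj_apply_of_col_eq (g : Matrix n n R) (P : (Matrix n n R)ˣ) {i j : n}
    (hij : i ≠ j) {v w : n → R} {a m : R} (hPv : P.val.col j = v)
    (hv : g *ᵥ v = a • v + m • w) :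
    m ∣ (P⁻¹.val * g * P.val) i j := by
  have hPinv : P⁻¹.val *ᵥ v = Pi.single j 1 := by
    rw [← hPv, ← mulVec_single_one, mulVec_mulVec, Units.inv_mul, one_mulVec]
  refine ⟨(P⁻¹.val *ᵥ w) i, ?_⟩
  calc (P⁻¹.val * g * P.val) i j = (P⁻¹.val *ᵥ (g *ᵥ v)) i := by
        rw [← hPv, ← mulVec_single_one, mulVec_mulVec, mulVec_mulVec, mulVec_single_one,
          col_apply]
    _ = m * (P⁻¹.val *ᵥ w) i := by
        rw [hv, mulVec_add, mulVec_smul, mulVec_smul, hPinv]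
        simp [hij]

end Matrix

/-- For `g ∈ M₂(O)` not scalar modulo `π`, the characteristic polynomial of `g` is
reducible modulo `π^n` if and only if `g` is conjugate over `O` into matrices that are
upper triangular modulo `π^n` (equivalently, the standard lattice `O²` admits a `g`-stable
free rank-1 quotient situation giving a point at distance `n` in the tree). -/
theorem charpoly_reducible_iff_triangularisable
    {O : Type*} [CommRing O] [IsDomain O] [IsDiscreteValuationRing O]
    (π : O) (hπ : Irreducible π) (n : ℕ)
    (g : Matrix (Fin 2) (Fin 2) O)
    (hns : ¬ ∃ c : O, g.map (Ideal.Quotient.mk (Ideal.span {π}))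
        = Ideal.Quotient.mk (Ideal.span {π}) c • (1 : Matrix (Fin 2) (Fin 2) (O ⧸ Ideal.span {π}))) :
    (∃ α β : O ⧸ Ideal.span {π ^ n},
        Ideal.Quotient.mk (Ideal.span {π ^ n}) (Matrix.trace g) = α + β
        ∧ Ideal.Quotient.mk (Ideal.span {π ^ n}) (Matrix.det g) = α * β)
    ↔ (∃ P : (Matrix (Fin 2) (Fin 2) O)ˣ,
        π ^ n ∣ ((P⁻¹ : (Matrix (Fin 2) (Fin 2) O)ˣ).val * g * P.val) 1 0) := by
  constructor
  · rintro ⟨α, β, htr, hdet⟩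
    obtain ⟨a, rfl⟩ := Ideal.Quotient.mk_surjective α
    have hroot : π ^ n ∣ (g - scalar (Fin 2) a).det := by
      rw [← Ideal.mem_span_singleton, ← Ideal.Quotient.eq_zero_iff_mem, det_sub_scalar_fin_two,
        map_add, map_sub, map_mul, map_pow, htr, hdet]
      ring
    have hunit : ∃ i j, IsUnit ((g - scalar (Fin 2) a) i j) := by
      by_contra! h
      refine hns ⟨a, (map_mk_eq_smul_one_iff _ g a).2 fun i j => ?_⟩
      rw [← hπ.maximalIdeal_eq]
      exact (IsLocalRing.mem_maximalIdeal _).2 (h i j)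
    obtain ⟨k, hk⟩ := exists_isUnit_adjugate_col _ hunit
    obtain ⟨P, hP⟩ := exists_units_col_zero_eq _ hk
    obtain ⟨w, hw⟩ := exists_mulVec_adjugate_col_eq g a _ k hroot
    exact ⟨P, dvd_conj_apply_of_col_eq g P one_ne_zero hP hw⟩
  · rintro ⟨P, hP⟩
    refine ⟨Ideal.Quotient.mk _ ((P⁻¹.val * g * P.val) 0 0),
      Ideal.Quotient.mk _ ((P⁻¹.val * g * P.val) 1 1), ?_, ?_⟩
    · rw [← trace_units_conj' P g, trace_fin_two, map_add]
    · rw [← det_units_conj' P g, det_fin_two, map_sub, map_mul, map_mul,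
        Ideal.Quotient.eq_zero_iff_mem.2 (Ideal.mem_span_singleton.2 hP), mul_zero, sub_zero]
end

section
/- Let P(t) ∈ O[t] be a monic quadratic polynomial with P(t) ≡ (t−α)(t−β) mod π^n for some α, β ∈ O with v(α−β) < n/2, where v is the normalized valuation. Then there exist α', β' ∈ O with P(t) = (t−α')(t−β') and v(α'−β') = v(α−β). -/
open Polynomial

/-!
Write `P = X ^ 2 + b X + c`. The congruence makes `P'(α) = 2α + b ≡ α - β` of valuation exactly `r`
and `P(α) ≡ 0 mod π ^ (2r + 1)`. Substituting `t = α + π ^ r s` gives `P(t) = π ^ (2r) Q(s)` with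
`Q = s ^ 2 + u s + π e` monic and `u` a unit, so Hensel's lemma in the complete ring `O` yields a root
`s ≡ 0 mod π` of `Q`. The root `α' = α + π ^ r s` of `P` and its conjugate `β' = -b - α'` then satisfy
`α' - β' = P'(α') ≡ P'(α) mod π ^ (r + 1)`, which keeps the valuation `r`.
-/

theorem HenselianRing.isUnit_add {R : Type*} [CommRing R] {I : Ideal R} [HenselianRing R I]
    {u x : R} (hu : IsUnit u) (hx : x ∈ I) : IsUnit (u + x) := by
  have := isLocalHom_of_le_jacobson_bot I HenselianRing.jac
  apply isUnit_of_map_unit (Ideal.Quotient.mk I)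
  rw [map_add, Ideal.Quotient.eq_zero_iff_mem.mpr hx, add_zero]
  exact hu.map _

theorem HenselianRing.exists_root_quadratic {R : Type*} [CommRing R] {I : Ideal R}
    [HenselianRing R I] {a b c d e : R} (hderiv : Associated d (2 * a + b)) (he : e ∈ I)
    (heval : a ^ 2 + b * a + c = d ^ 2 * e) :
    ∃ a', a' ^ 2 + b * a' + c = 0 ∧ Associated d (2 * a' + b) := by
  nontriviality R
  obtain ⟨u, hu⟩ := hderiv
  obtain ⟨s, hs, hsI⟩ := HenselianRing.is_henselian (X ^ 2 + C (u : R) * X + C e)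
    (isMonicOfDegree_add_add_two _ _).monic 0 (by simpa using he) (by simpa using u.isUnit.map _)
  have hQs : s ^ 2 + u * s + e = 0 := by simpa [sq] using hs
  rw [sub_zero] at hsI
  refine ⟨a + d * s, by linear_combination d ^ 2 * hQs - d * s * hu + heval, ?_⟩
  refine ⟨(HenselianRing.isUnit_add u.isUnit (I.mul_mem_left 2 hsI)).unit, ?_⟩
  rw [IsUnit.unit_spec]
  linear_combination hu

theorem Irreducible.associated_pow_iff {O : Type*} [CommRing O] [IsDomain O]
    [IsDiscreteValuationRing O] {π : O} (hπ : Irreducible π) {r : ℕ} {x : O} :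
    Associated (π ^ r) x ↔ π ^ r ∣ x ∧ ¬π ^ (r + 1) ∣ x := by
  constructor
  · rintro ⟨u, rfl⟩
    refine ⟨dvd_mul_right _ _, fun h => hπ.not_isUnit (isUnit_of_dvd_unit ?_ u.isUnit)⟩
    rwa [pow_succ, mul_dvd_mul_iff_left (pow_ne_zero r hπ.ne_zero)] at h
  · rintro ⟨⟨w, rfl⟩, hw⟩
    have hwunit : IsUnit w := by
      by_contra h
      have : π ∣ w := by
        rw [← Ideal.mem_span_singleton, ← hπ.maximalIdeal_eq]
        exact h
      exact hw (pow_succ π r ▸ mul_dvd_mul_left _ this)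
    exact ⟨hwunit.unit, rfl⟩

/-- Quantitative Hensel's lemma for quadratics over a complete DVR: if a monic quadratic
`P` satisfies `P ≡ (t-α)(t-β) (mod π^n)` with `v(α-β) = r < n/2`, then `P` factors exactly
as `(t-α')(t-β')` with `v(α'-β') = r`. -/
theorem hensel_quadratic
    {O : Type*} [CommRing O] [IsDomain O] [IsDiscreteValuationRing O]
    (π : O) (hπ : Irreducible π)
    [IsAdicComplete (Ideal.span {π}) O]
    (n : ℕ) (P : Polynomial O) (hmonic : P.Monic) (hdeg : P.natDegree = 2)
    (α β : O)
    (hcong : ∀ i : ℕ, π ^ n ∣ (P - (X - C α) * (X - C β)).coeff i)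
    (r : ℕ) (hr2 : 2 * r < n)
    (hrdvd : π ^ r ∣ (α - β)) (hrnot : ¬ π ^ (r + 1) ∣ (α - β)) :
    ∃ α' β' : O, P = (X - C α') * (X - C β')
      ∧ π ^ r ∣ (α' - β') ∧ ¬ π ^ (r + 1) ∣ (α' - β') := by
  obtain ⟨b, c, rfl⟩ := isMonicOfDegree_two_iff.mp ⟨hdeg, hmonic⟩
  have hdiff : X ^ 2 + C b * X + C c - (X - C α) * (X - C β)
      = C (b + (α + β)) * X + C (c - α * β) := by
    simp only [map_add, map_sub, map_mul]
    ring
  have hsum : π ^ n ∣ b + (α + β) := by simpa [hdiff] using hcong 1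
  have hprod : π ^ n ∣ c - α * β := by simpa [hdiff] using hcong 0
  obtain ⟨m, rfl⟩ : ∃ m, n = 2 * r + 1 + m := ⟨n - (2 * r + 1), by omega⟩
  have hsum' : π ^ (r + 1) ∣ b + (α + β) := (pow_dvd_pow π (by omega)).trans hsum
  have hderiv : Associated (π ^ r) (2 * α + b) := by
    rw [hπ.associated_pow_iff, show 2 * α + b = (α - β) + (b + (α + β)) by ring]
    exact ⟨dvd_add hrdvd ((pow_dvd_pow π (by omega)).trans hsum),
      fun h => hrnot ((dvd_add_left hsum').mp h)⟩
  obtain ⟨d₁, hd₁⟩ := hsum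
  obtain ⟨d₀, hd₀⟩ := hprod
  obtain ⟨α', hroot, hα'⟩ :=
    HenselianRing.exists_root_quadratic (I := Ideal.span {π}) (c := c) hderiv
    (Ideal.mul_mem_right (π ^ m * (α * d₁ + d₀)) _ (Ideal.mem_span_singleton_self π))
    (by linear_combination α * hd₁ + hd₀)
  refine ⟨α', -b - α', ?_, hπ.associated_pow_iff.mp (by convert hα' using 1; ring)⟩
  have hc : C c = C (-α' * (b + α')) := congrArg C (by linear_combination hroot)
  rw [hc]
  simp only [map_mul, map_neg, map_add, map_sub]
  ring
end

section
/- Let n(ρ) be finite, where n(ρ) is the supremum of n such that there exists a pair of conjugate characters modulo π^n, and let m(ρ) be the maximum of m(χ₁,χ₂) over pairs of conjugate characters modulo π^{n(ρ)}. Then either m(ρ) = n(ρ) or 2·m(ρ) < n(ρ). -/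
open Matrix

/-!
If `2m ≥ n`, then for a conjugate pair `(χ₁, χ₂)` modulo `π^n` with `χ₁ ≡ χ₂ mod π^m` all products
`(χ₁ - χ₂)(g) · (χ₁ - χ₂)(h)` vanish modulo `π^n`. This makes the average `μ = (χ₁ + χ₂)/2` a
character, and since `μ² - χ₁χ₂ = ((χ₁ - χ₂)/2)² = 0`, the pair `(μ, μ)` is again conjugate, with
`m(μ, μ) = n`. Hence `m(ρ) = n(ρ)`.
-/

theorem mul_eq_zero_of_pow_dvd_of_pow_dvd {R : Type*} [CommMonoidWithZero R] {x a b : R}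
    {k i j : ℕ} (hx : x ^ k = 0) (hk : k ≤ i + j) (ha : x ^ i ∣ a) (hb : x ^ j ∣ b) :
    a * b = 0 := by
  have hab : x ^ (i + j) ∣ a * b := pow_add x i j ▸ mul_dvd_mul ha hb
  rwa [pow_eq_zero_of_le hk hx, zero_dvd_iff] at hab

section AverageCharacter

variable {R : Type*} [CommRing R] {G : Type*} [Group G]

noncomputable def averageCharacter (h2 : IsUnit (2 : R)) (χ₁ χ₂ : G →* Rˣ)
    (hsq : ∀ g g', ((χ₁ g : R) - χ₂ g) * ((χ₁ g' : R) - χ₂ g') = 0) : G →* Rˣ :=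
  MonoidHom.toHomUnits
    { toFun := fun g => ↑h2.unit⁻¹ * ((χ₁ g : R) + χ₂ g)
      map_one' := by
        simp only [map_one, Units.val_one]
        linear_combination h2.mul_val_inv
      map_mul' := fun g g' => by
        simp only [map_mul, Units.val_mul]
        linear_combination ↑h2.unit⁻¹ * ↑h2.unit⁻¹ * hsq g g'
          - ↑h2.unit⁻¹ * ((χ₁ g : R) * χ₁ g' + χ₂ g * χ₂ g') * h2.mul_val_inv }

variable {h2 : IsUnit (2 : R)} {χ₁ χ₂ : G →* Rˣ}
  {hsq : ∀ g g', ((χ₁ g : R) - χ₂ g) * ((χ₁ g' : R) - χ₂ g') = 0}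

theorem averageCharacter_apply (g : G) :
    (averageCharacter h2 χ₁ χ₂ hsq g : R) = ↑h2.unit⁻¹ * ((χ₁ g : R) + χ₂ g) :=
  rfl

theorem averageCharacter_add_self (g : G) :
    (averageCharacter h2 χ₁ χ₂ hsq g : R) + averageCharacter h2 χ₁ χ₂ hsq g = χ₁ g + χ₂ g := by
  rw [averageCharacter_apply]
  linear_combination ((χ₁ g : R) + χ₂ g) * h2.mul_val_inv

theorem averageCharacter_mul_self (g : G) :
    (averageCharacter h2 χ₁ χ₂ hsq g : R) * averageCharacter h2 χ₁ χ₂ hsq g = χ₁ g * χ₂ g := by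
  rw [averageCharacter_apply]
  linear_combination ↑h2.unit⁻¹ * ↑h2.unit⁻¹ * hsq g g
    + (χ₁ g : R) * χ₂ g * (1 + 2 * ↑h2.unit⁻¹) * h2.mul_val_inv

end AverageCharacter

theorem IsConjPair.averageCharacter {O : Type*} [CommRing O] {G : Type*} [Group G] {π : O} {n : ℕ}
    {ρ : G →* GL (Fin 2) O} {χ₁ χ₂ : G →* (O ⧸ Ideal.span {π ^ n})ˣ} (hconj : IsConjPair π n ρ χ₁ χ₂)
    (h2 : IsUnit (2 : O ⧸ Ideal.span {π ^ n}))
    (hsq : ∀ g g', ((χ₁ g : O ⧸ Ideal.span {π ^ n}) - χ₂ g) * ((χ₁ g' : _) - χ₂ g') = 0) :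
    IsConjPair π n ρ (averageCharacter h2 χ₁ χ₂ hsq) (averageCharacter h2 χ₁ χ₂ hsq) := fun g =>
  ⟨(hconj g).1.trans (averageCharacter_add_self g).symm,
    (hconj g).2.trans (averageCharacter_mul_self g).symm⟩

theorem m_rho_dichotomy_general
    {O : Type*} [CommRing O]
    (π : O) (h2 : IsUnit (2 : O))
    {G : Type*} [Group G]
    (ρ : G →* GL (Fin 2) O)
    (n : ℕ)
    (m : ℕ) (hm_le : m ≤ n)
    (hm_ex : ∃ χ₁ χ₂ : G →* (O ⧸ Ideal.span {π ^ n})ˣ, IsConjPair π n ρ χ₁ χ₂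
      ∧ ∀ g : G, (Ideal.Quotient.mk (Ideal.span {π ^ n}) π) ^ m ∣
          ((χ₁ g : O ⧸ Ideal.span {π ^ n}) - χ₂ g))
    (hm_max : ∀ k ≤ n,
      (∃ χ₁ χ₂ : G →* (O ⧸ Ideal.span {π ^ n})ˣ, IsConjPair π n ρ χ₁ χ₂
        ∧ ∀ g : G, (Ideal.Quotient.mk (Ideal.span {π ^ n}) π) ^ k ∣
            ((χ₁ g : O ⧸ Ideal.span {π ^ n}) - χ₂ g)) → k ≤ m) :
    m = n ∨ 2 * m < n := by
  refine (lt_or_ge (2 * m) n).symm.imp (fun hmn => le_antisymm hm_le ?_) id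
  obtain ⟨χ₁, χ₂, hconj, hdvd⟩ := hm_ex
  set mk := Ideal.Quotient.mk (Ideal.span {π ^ n})
  have hπn : mk π ^ n = 0 := by
    rw [← map_pow, Ideal.Quotient.eq_zero_iff_mem]
    exact Ideal.mem_span_singleton_self _
  have h2' : IsUnit (2 : O ⧸ Ideal.span {π ^ n}) := map_ofNat mk 2 ▸ h2.map mk
  have hsq : ∀ g g', ((χ₁ g : O ⧸ Ideal.span {π ^ n}) - χ₂ g) * ((χ₁ g' : _) - χ₂ g') = 0 :=
    fun g g' => mul_eq_zero_of_pow_dvd_of_pow_dvd hπn (by omega) (hdvd g) (hdvd g')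
  exact hm_max n le_rfl ⟨_, _, hconj.averageCharacter h2' hsq, fun g => by simp⟩

/-- If `n = n(ρ)` is finite (the largest integer admitting a pair of conjugate characters
modulo `π^n`) and `m = m(ρ)` is the maximum of `m(χ₁,χ₂)` over pairs of conjugate
characters modulo `π^n`, then either `m = n` or `2m < n`. -/
theorem m_rho_dichotomy
    {O : Type*} [CommRing O] [IsDomain O] [IsDiscreteValuationRing O]
    (π : O) (hπ : Irreducible π) (h2 : IsUnit (2 : O))
    {G : Type*} [Group G]
    (ρ : G →* GL (Fin 2) O)
    (n : ℕ)
    (hn_ex : ∃ χ₁ χ₂ : G →* (O ⧸ Ideal.span {π ^ n})ˣ, IsConjPair π n ρ χ₁ χ₂)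
    (hn_max : ∀ n' : ℕ,
      (∃ χ₁ χ₂ : G →* (O ⧸ Ideal.span {π ^ n'})ˣ, IsConjPair π n' ρ χ₁ χ₂) → n' ≤ n)
    (m : ℕ) (hm_le : m ≤ n)
    (hm_ex : ∃ χ₁ χ₂ : G →* (O ⧸ Ideal.span {π ^ n})ˣ, IsConjPair π n ρ χ₁ χ₂
      ∧ ∀ g : G, (Ideal.Quotient.mk (Ideal.span {π ^ n}) π) ^ m ∣
          ((χ₁ g : O ⧸ Ideal.span {π ^ n}) - χ₂ g))
    (hm_max : ∀ k ≤ n,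
      (∃ χ₁ χ₂ : G →* (O ⧸ Ideal.span {π ^ n})ˣ, IsConjPair π n ρ χ₁ χ₂
        ∧ ∀ g : G, (Ideal.Quotient.mk (Ideal.span {π ^ n}) π) ^ k ∣
            ((χ₁ g : O ⧸ Ideal.span {π ^ n}) - χ₂ g)) → k ≤ m) :
    m = n ∨ 2 * m < n :=
  m_rho_dichotomy_general π h2 ρ n m hm_le hm_ex hm_max
end

section
/- Suppose there is a basis of O² with respect to which every ρ(g), g ∈ G, is represented by a matrix [[a_g, b_g],[π^{2r} c_g, d_g]] with a_g ≡ d_g mod π^r. Then the map g ↦ (a_g + d_g)/2 ≡ (trace ρ(g))/2 mod π^{2r} is a multiplicative character G → (O/π^{2r} O)^×. -/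
/-!
For `M = [[a, b], [γ, d]]` and `N = [[a', b'], [γ', d']]` one has
`2 tr(MN) - tr M tr N = (a - d)(a' - d') + 2 (b γ' + b' γ)`. When `γ, γ' ∈ (π^{2r})` and
`a ≡ d`, `a' ≡ d' (mod π^r)`, the right-hand side lies in `(π^{2r})`, so `tr/2` is
multiplicative modulo `π^{2r}`.
-/

open Matrix

def MonoidHom.ofUnitMulEq {M S : Type*} [Monoid M] [CommMonoid S] (u : Sˣ) (f : M → S)
    (map_one : f 1 = u) (map_mul : ∀ x y, u * f (x * y) = f x * f y) : M →* S where
  toFun x := ↑u⁻¹ * f x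
  map_one' := by rw [map_one, Units.inv_mul]
  map_mul' x y := by
    rw [← Units.inv_mul_cancel_left u (f (x * y)), map_mul]
    ac_rfl

theorem MonoidHom.unit_mul_ofUnitMulEq {M S : Type*} [Monoid M] [CommMonoid S] (u : Sˣ)
    (f : M → S) (map_one : f 1 = u) (map_mul : ∀ x y, u * f (x * y) = f x * f y) (x : M) :
    ↑u * MonoidHom.ofUnitMulEq u f map_one map_mul x = f x :=
  Units.mul_inv_cancel_left u (f x)

theorem Matrix.two_mul_trace_mul_sub_trace_mul_trace_mem {R : Type*} [CommRing R]
    {J : Ideal R} {M N : Matrix (Fin 2) (Fin 2) R} (hM₁₀ : M 1 0 ∈ J ^ 2) (hN₁₀ : N 1 0 ∈ J ^ 2)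
    (hM : M 0 0 - M 1 1 ∈ J) (hN : N 0 0 - N 1 1 ∈ J) :
    2 * trace (M * N) - trace M * trace N ∈ J ^ 2 := by
  have key : 2 * trace (M * N) - trace M * trace N
      = (M 0 0 - M 1 1) * (N 0 0 - N 1 1) + 2 * (M 0 1 * N 1 0 + N 0 1 * M 1 0) := by
    simp only [trace_fin_two, mul_apply, Fin.sum_univ_two]
    ring
  rw [key]
  exact add_mem (pow_two J ▸ Ideal.mul_mem_mul hM hN) <| Ideal.mul_mem_left _ _ <|
    add_mem (Ideal.mul_mem_left _ _ hN₁₀) (Ideal.mul_mem_left _ _ hM₁₀)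

theorem half_trace_multiplicative_of_band_shape_general
    {O : Type*} [CommRing O]
    (π : O) (h2 : IsUnit (2 : O))
    {G : Type*} [Group G] (r : ℕ)
    (ρ : G →* GL (Fin 2) O)
    (a b c d : G → O)
    (hshape : ∀ g : G, (ρ g : Matrix (Fin 2) (Fin 2) O) = !![a g, b g; π ^ (2 * r) * c g, d g])
    (hcong : ∀ g : G, π ^ r ∣ (a g - d g)) :
    ∃ χ : G →* (O ⧸ Ideal.span {π ^ (2 * r)})ˣ,
      ∀ g : G, 2 * (χ g : O ⧸ Ideal.span {π ^ (2 * r)})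
        = Ideal.Quotient.mk (Ideal.span {π ^ (2 * r)}) (a g + d g)
      ∧ 2 * (χ g : O ⧸ Ideal.span {π ^ (2 * r)})
        = Ideal.Quotient.mk (Ideal.span {π ^ (2 * r)})
            (Matrix.trace (ρ g : Matrix (Fin 2) (Fin 2) O)) := by
  set J : Ideal O := Ideal.span {π ^ r}
  have hJ : Ideal.span {π ^ (2 * r)} = J ^ 2 := by rw [Ideal.span_singleton_pow, pow_mul']
  have htrace (g : G) : trace (ρ g : Matrix (Fin 2) (Fin 2) O) = a g + d g := by
    simp [hshape g, trace_fin_two]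
  have hlower (g : G) : (ρ g : Matrix (Fin 2) (Fin 2) O) 1 0 ∈ J ^ 2 := by
    simpa [hshape g, ← hJ] using Ideal.mul_mem_right (c g) _ (Ideal.mem_span_singleton_self _)
  have hdiag (g : G) :
      (ρ g : Matrix (Fin 2) (Fin 2) O) 0 0 - (ρ g : Matrix (Fin 2) (Fin 2) O) 1 1 ∈ J := by
    simpa [hshape g, J, Ideal.mem_span_singleton] using hcong g
  set mk := Ideal.Quotient.mk (Ideal.span {π ^ (2 * r)})
  let f (g : G) : O ⧸ Ideal.span {π ^ (2 * r)} := mk (trace (ρ g : Matrix (Fin 2) (Fin 2) O))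
  let u := (h2.map mk).unit
  have hu : (u : O ⧸ Ideal.span {π ^ (2 * r)}) = mk 2 := IsUnit.unit_spec _
  have hmul (g h : G) : ↑u * f (g * h) = f g * f h := by
    rw [hu, ← map_mul, ← map_mul, Ideal.Quotient.eq, hJ, map_mul, Units.val_mul]
    exact two_mul_trace_mul_sub_trace_mul_trace_mem (hlower g) (hlower h) (hdiag g) (hdiag h)
  have hone : f 1 = u := by simp [f, hu]
  refine ⟨(MonoidHom.ofUnitMulEq u f hone hmul).toHomUnits, fun g => ?_⟩
  have hχ := MonoidHom.unit_mul_ofUnitMulEq u f hone hmul g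
  rw [hu, map_ofNat] at hχ
  exact ⟨by rw [MonoidHom.coe_toHomUnits, hχ, ← htrace], hχ⟩

/-- If, in some basis, every `ρ(g)` is represented by `[[a_g, b_g],[π^{2r} c_g, d_g]]`
with `a_g ≡ d_g (mod π^r)`, then `g ↦ (a_g + d_g)/2 = (trace ρ(g))/2 mod π^{2r}` is a
multiplicative character `G → (O/π^{2r} O)ˣ`. -/
theorem half_trace_multiplicative_of_band_shape
    {O : Type*} [CommRing O] [IsDomain O] [IsDiscreteValuationRing O]
    (π : O) (hπ : Irreducible π) (h2 : IsUnit (2 : O))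
    {G : Type*} [Group G] (r : ℕ)
    (ρ : G →* GL (Fin 2) O)
    (a b c d : G → O)
    (hshape : ∀ g : G, (ρ g : Matrix (Fin 2) (Fin 2) O) = !![a g, b g; π ^ (2 * r) * c g, d g])
    (hcong : ∀ g : G, π ^ r ∣ (a g - d g)) :
    ∃ χ : G →* (O ⧸ Ideal.span {π ^ (2 * r)})ˣ,
      ∀ g : G, 2 * (χ g : O ⧸ Ideal.span {π ^ (2 * r)})
        = Ideal.Quotient.mk (Ideal.span {π ^ (2 * r)}) (a g + d g)
      ∧ 2 * (χ g : O ⧸ Ideal.span {π ^ (2 * r)})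
        = Ideal.Quotient.mk (Ideal.span {π ^ (2 * r)})
            (Matrix.trace (ρ g : Matrix (Fin 2) (Fin 2) O)) :=
  half_trace_multiplicative_of_band_shape_general π h2 r ρ a b c d hshape hcong
end

section
/- Suppose h ∈ G is such that ρ(h) is diagonalizable over O with eigenvalues α, β ∈ O satisfying v(β−α) = r (a 'thin element'), and suppose g ↦ (trace ρ(g))/2 mod π^k is multiplicative. Then k ≤ 2r. [Key step: from (t−α)(t−β) ≡ (t−γ)² mod π^k with γ = (α+β)/2, deduce (α−β)² ≡ 0 mod π^k.] -/
/-!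
Since `ρ(h)` is conjugate to `diag(α, β)`, the traces of `ρ(h)` and `ρ(h²)` are `α + β` and
`α² + β²`. Writing `c = χ(h)`, multiplicativity gives `α + β ≡ 2c` and `α² + β² ≡ 2c²`
modulo `π^k`, hence `(α - β)² = 2(α² + β²) - (α + β)² ≡ 0`. As `π ^ (r + 1) ∤ β - α`, the
`π`-adic valuation of `(β - α)²` is at most `2r`, so `k ≤ 2r`.
-/

open Matrix

theorem Matrix.trace_pow_of_units_conj_eq_diagonal {n R : Type*} [Fintype n] [DecidableEq n]
    [CommSemiring R] {M : Matrix n n R} {P : (Matrix n n R)ˣ} {d : n → R}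
    (hP : (↑P⁻¹ : Matrix n n R) * M * P = diagonal d) (m : ℕ) :
    trace (M ^ m) = ∑ i, d i ^ m := by
  rw [← trace_units_conj' P, ← Units.conj_pow', hP, diagonal_pow, trace_diagonal]
  rfl

theorem sub_sq_eq_zero_of_add_eq_two_mul {S : Type*} [CommRing S] {x y c : S}
    (h₁ : x + y = 2 * c) (h₂ : x ^ 2 + y ^ 2 = 2 * c ^ 2) : (x - y) ^ 2 = 0 := by
  linear_combination 2 * h₂ - (x + y + 2 * c) * h₁

theorem Prime.le_two_mul_of_pow_dvd_sq {R : Type*} [CommMonoidWithZero R] [IsCancelMulZero R]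
    {p x : R} (hp : Prime p) {r k : ℕ} (hr : ¬ p ^ (r + 1) ∣ x) (hk : p ^ k ∣ x ^ 2) :
    k ≤ 2 * r := by
  rw [pow_dvd_iff_le_emultiplicity, emultiplicity_pow hp] at hk
  rw [pow_dvd_iff_le_emultiplicity, not_le, Nat.cast_add, Nat.cast_one,
    ENat.lt_add_one_iff (ENat.natCast_ne_top r)] at hr
  have : (k : ℕ∞) ≤ 2 * r := hk.trans (by push_cast; gcongr)
  exact_mod_cast this

theorem k_le_two_r_of_thin_element_general
    {O : Type*} [CommRing O] [IsDomain O] [IsDiscreteValuationRing O]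
    (π : O) (hπ : Irreducible π)
    {G : Type*} [Group G]
    (ρ : G →* GL (Fin 2) O)
    (h : G) (α β : O) (r : ℕ)
    (hdiag : ∃ P : (Matrix (Fin 2) (Fin 2) O)ˣ,
      (P⁻¹ : (Matrix (Fin 2) (Fin 2) O)ˣ).val * (ρ h : Matrix (Fin 2) (Fin 2) O) * P.val
        = Matrix.diagonal ![α, β])
    (hv : π ^ r ∣ (β - α) ∧ ¬ π ^ (r + 1) ∣ (β - α))
    (k : ℕ)
    (hmult : ∃ χ : G →* (O ⧸ Ideal.span {π ^ k})ˣ,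
      ∀ g : G, 2 * (χ g : O ⧸ Ideal.span {π ^ k})
        = Ideal.Quotient.mk (Ideal.span {π ^ k}) (Matrix.trace (ρ g : Matrix (Fin 2) (Fin 2) O))) :
    k ≤ 2 * r := by
  obtain ⟨P, hP⟩ := hdiag
  obtain ⟨χ, hχ⟩ := hmult
  have htrace (m : ℕ) : trace (ρ (h ^ m) : Matrix (Fin 2) (Fin 2) O) = α ^ m + β ^ m := by
    simp [trace_pow_of_units_conj_eq_diagonal hP, Fin.sum_univ_two]
  have hsq : Ideal.Quotient.mk (Ideal.span {π ^ k}) ((β - α) ^ 2) = 0 := by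
    have h₁ := hχ (h ^ 1)
    have h₂ := hχ (h ^ 2)
    rw [htrace] at h₁ h₂
    simp only [pow_one, map_pow, Units.val_pow_eq_pow_val, map_add] at h₁ h₂
    rw [sub_sq_comm, map_pow, map_sub]
    exact sub_sq_eq_zero_of_add_eq_two_mul h₁.symm h₂.symm
  rw [Ideal.Quotient.eq_zero_iff_mem, Ideal.mem_span_singleton] at hsq
  exact hπ.prime.le_two_mul_of_pow_dvd_sq hv.2 hsq

/-- If `G` contains a thin element `h` (i.e. `ρ(h)` is diagonalizable over `O` with
eigenvalues `α, β` satisfying `v(β - α) = r`), and `g ↦ (trace ρ(g))/2 mod π^k` is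
multiplicative, then `k ≤ 2r`. -/
theorem k_le_two_r_of_thin_element
    {O : Type*} [CommRing O] [IsDomain O] [IsDiscreteValuationRing O]
    (π : O) (hπ : Irreducible π) (h2 : IsUnit (2 : O))
    {G : Type*} [Group G]
    (ρ : G →* GL (Fin 2) O)
    (h : G) (α β : O) (r : ℕ)
    (hdiag : ∃ P : (Matrix (Fin 2) (Fin 2) O)ˣ,
      (P⁻¹ : (Matrix (Fin 2) (Fin 2) O)ˣ).val * (ρ h : Matrix (Fin 2) (Fin 2) O) * P.val
        = Matrix.diagonal ![α, β])
    (hv : π ^ r ∣ (β - α) ∧ ¬ π ^ (r + 1) ∣ (β - α))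
    (k : ℕ)
    (hmult : ∃ χ : G →* (O ⧸ Ideal.span {π ^ k})ˣ,
      ∀ g : G, 2 * (χ g : O ⧸ Ideal.span {π ^ k})
        = Ideal.Quotient.mk (Ideal.span {π ^ k}) (Matrix.trace (ρ g : Matrix (Fin 2) (Fin 2) O))) :
    k ≤ 2 * r :=
  k_le_two_r_of_thin_element_general π hπ ρ h α β r hdiag hv k hmult
end

section
/- Let ε : G → O/π^n O be a group homomorphism to the additive group such that ε(g)·ε(h) = 0 for all g, h ∈ G, and let (χ₁, χ₂) be characters G → (O/π^n O)^× with χ₁·ε = χ₂·ε (pointwise products). Define η₁(g) = χ₁(g)(1+ε(g)) and η₂(g) = χ₂(g)(1−ε(g)). Then η₁ and η₂ are multiplicative characters G → (O/π^n O)^× and η₁ + η₂ = χ₁ + χ₂ pointwise. -/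
/-!
Since `ε` is additive with `ε g * ε h = 0`, the map `g ↦ 1 + ε g` is a homomorphism into the
units, with inverse `g ↦ 1 - ε g`; so `η₁ = χ₁ · (1 + ε)` and `η₂ = χ₂ · (1 + ε)⁻¹` are
characters. Their sum is `χ₁ + χ₂ + (χ₁ ε - χ₂ ε) = χ₁ + χ₂`.
-/

section OneAddSquareZero

variable {G R : Type*} [Monoid G] [Ring R]

theorem map_one_eq_zero_of_map_mul_eq_add (ε : G → R)
    (hε_add : ∀ g h : G, ε (g * h) = ε g + ε h) : ε 1 = 0 :=
  left_eq_add.mp <| by rw [← hε_add 1 1, mul_one]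

def oneAddUnitsHom (ε : G → R) (hε_add : ∀ g h : G, ε (g * h) = ε g + ε h)
    (hε_sq : ∀ g h : G, ε g * ε h = 0) : G →* Rˣ where
  toFun g := ⟨1 + ε g, 1 - ε g, by noncomm_ring [hε_sq g g], by noncomm_ring [hε_sq g g]⟩
  map_one' := by ext; simp [map_one_eq_zero_of_map_mul_eq_add ε hε_add]
  map_mul' g h := by ext; simp only [Units.val_mul, hε_add]; noncomm_ring [hε_sq g h]

theorem val_oneAddUnitsHom (ε : G → R) (hε_add : ∀ g h : G, ε (g * h) = ε g + ε h)
    (hε_sq : ∀ g h : G, ε g * ε h = 0) (g : G) :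
    (oneAddUnitsHom ε hε_add hε_sq g : R) = 1 + ε g := rfl

theorem val_inv_oneAddUnitsHom {R : Type*} [CommRing R] (ε : G → R)
    (hε_add : ∀ g h : G, ε (g * h) = ε g + ε h) (hε_sq : ∀ g h : G, ε g * ε h = 0) (g : G) :
    ((oneAddUnitsHom ε hε_add hε_sq)⁻¹ g : R) = 1 - ε g := rfl

end OneAddSquareZero

theorem twisted_characters_general
    {O : Type*} [CommRing O]
    (π : O)
    {G : Type*} [Group G] (n : ℕ)
    (ε : G → O ⧸ Ideal.span {π ^ n})
    (hε_add : ∀ g h : G, ε (g * h) = ε g + ε h)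
    (hε_sq : ∀ g h : G, ε g * ε h = 0)
    (χ₁ χ₂ : G →* (O ⧸ Ideal.span {π ^ n})ˣ)
    (hχε : ∀ g : G, (χ₁ g : O ⧸ Ideal.span {π ^ n}) * ε g
      = (χ₂ g : O ⧸ Ideal.span {π ^ n}) * ε g) :
    ∃ η₁ η₂ : G →* (O ⧸ Ideal.span {π ^ n})ˣ,
      (∀ g : G,
        (η₁ g : O ⧸ Ideal.span {π ^ n}) = (χ₁ g : O ⧸ Ideal.span {π ^ n}) * (1 + ε g)
        ∧ (η₂ g : O ⧸ Ideal.span {π ^ n}) = (χ₂ g : O ⧸ Ideal.span {π ^ n}) * (1 - ε g))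
      ∧ ∀ g : G,
        (η₁ g : O ⧸ Ideal.span {π ^ n}) + (η₂ g : O ⧸ Ideal.span {π ^ n})
          = (χ₁ g : O ⧸ Ideal.span {π ^ n}) + (χ₂ g : O ⧸ Ideal.span {π ^ n}) := by
  set u := oneAddUnitsHom ε hε_add hε_sq
  have hη : ∀ g : G, ((χ₁ * u) g : O ⧸ Ideal.span {π ^ n}) = χ₁ g * (1 + ε g)
      ∧ ((χ₂ * u⁻¹) g : O ⧸ Ideal.span {π ^ n}) = χ₂ g * (1 - ε g) := fun g => by
    simp only [MonoidHom.mul_apply, Units.val_mul, u, val_oneAddUnitsHom, val_inv_oneAddUnitsHom,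
      and_self]
  refine ⟨χ₁ * u, χ₂ * u⁻¹, hη, fun g => ?_⟩
  rw [(hη g).1, (hη g).2]
  linear_combination hχε g

/-- Let `ε : G → O/π^n O` be an additive character with `ε(g)ε(h) = 0` for all `g, h`, and
let `χ₁, χ₂ : G → (O/π^n O)ˣ` be characters with `χ₁·ε = χ₂·ε`. Then
`η₁(g) = χ₁(g)(1+ε(g))` and `η₂(g) = χ₂(g)(1-ε(g))` are multiplicative characters and
`η₁ + η₂ = χ₁ + χ₂` pointwise. -/
theorem twisted_characters
    {O : Type*} [CommRing O] [IsDomain O] [IsDiscreteValuationRing O]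
    (π : O) (hπ : Irreducible π)
    {G : Type*} [Group G] (n : ℕ)
    (ε : G → O ⧸ Ideal.span {π ^ n})
    (hε_add : ∀ g h : G, ε (g * h) = ε g + ε h)
    (hε_sq : ∀ g h : G, ε g * ε h = 0)
    (χ₁ χ₂ : G →* (O ⧸ Ideal.span {π ^ n})ˣ)
    (hχε : ∀ g : G, (χ₁ g : O ⧸ Ideal.span {π ^ n}) * ε g
      = (χ₂ g : O ⧸ Ideal.span {π ^ n}) * ε g) :
    ∃ η₁ η₂ : G →* (O ⧸ Ideal.span {π ^ n})ˣ,
      (∀ g : G,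
        (η₁ g : O ⧸ Ideal.span {π ^ n}) = (χ₁ g : O ⧸ Ideal.span {π ^ n}) * (1 + ε g)
        ∧ (η₂ g : O ⧸ Ideal.span {π ^ n}) = (χ₂ g : O ⧸ Ideal.span {π ^ n}) * (1 - ε g))
      ∧ ∀ g : G,
        (η₁ g : O ⧸ Ideal.span {π ^ n}) + (η₂ g : O ⧸ Ideal.span {π ^ n})
          = (χ₁ g : O ⧸ Ideal.span {π ^ n}) + (χ₂ g : O ⧸ Ideal.span {π ^ n}) :=
  twisted_characters_general π n ε hε_add hε_sq χ₁ χ₂ hχε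
end
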